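/- arXiv:2208.02378 — 10 statements merged into one kernel-verified Lean document; each statement's English description precedes it below -/
import Mathlib

section
/- Let A be an m-dimensional binary array of size n_1 × ⋯ × n_m with periodic extension 𝔸. If A has a repeated toroidal vector (h_1,...,h_m) such that h_i ≠ n_i/2 for every i, then there exists an n_1 × ⋯ × n_m window of 𝔸 containing four dots α_1', ω_1', α_2', ω_2' with (α_1', ω_1') ≠ (α_2', ω_2') and ω_1' - α_1' = ω_2' - α_2' (a repeated difference vector). -/
/-!
Work coordinatewise with centred residues. Let `δ i` be the representative of `h i` modulo
`n i` of least absolute value; since `2 h i ≠ n i` it satisfies `2 |δ i| < n i`. Let `s i` be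
the least-absolute representative of `α₂ i - α₁ i`, so `2 |s i| ≤ n i`. The parallelogram
`α₁, α₁ + δ, α₁ + s, α₁ + s + δ` then has extent `|s i| + |δ i| < n i` in every coordinate,
so it fits in one window, its corners are dots of the periodic extension congruent to
`α₁, ω₁, α₂, ω₂`, and both of its `δ`-edges have difference vector `δ`. The two pairs differ
because `s = 0` would force `α₁ = α₂` and then `ω₁ = ω₂`: distinct dots of `A` have distinct
residues.
-/

/-- `α` is a dot of the periodic extension of the binary array with dot set `D`
(indexed in the box `∏ [0, n i)`). -/
def IsExtDot (m : ℕ) (n : Fin m → ℕ) (D : Finset (Fin m → ℤ)) (α : Fin m → ℤ) : Prop :=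
  ∃ d ∈ D, ∀ i, (α i : ZMod (n i)) = (d i : ZMod (n i))

/-- `α` lies in the `n 1 × ⋯ × n m` window based at `κ`. -/
def InWindow (m : ℕ) (n : Fin m → ℕ) (κ α : Fin m → ℤ) : Prop :=
  ∀ i, κ i ≤ α i ∧ α i < κ i + (n i : ℤ)

lemma Int.eq_of_intCast_zmod_eq {n : ℕ} {x y : ℤ} (hx : 0 ≤ x ∧ x < n) (hy : 0 ≤ y ∧ y < n)
    (hxy : (x : ZMod n) = y) : x = y := by
  rw [ZMod.intCast_eq_intCast_iff'] at hxy
  rwa [Int.emod_eq_of_lt hx.1 hx.2, Int.emod_eq_of_lt hy.1 hy.2] at hxy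

section Box

variable {m : ℕ} {n : Fin m → ℕ} {D : Finset (Fin m → ℤ)}

lemma eq_of_forall_intCast_zmod_eq (hD : ∀ d ∈ D, ∀ i, 0 ≤ d i ∧ d i < n i) {x y : Fin m → ℤ}
    (hx : x ∈ D) (hy : y ∈ D) (hxy : ∀ i, (x i : ZMod (n i)) = y i) : x = y :=
  funext fun i => Int.eq_of_intCast_zmod_eq (hD x hx i) (hD y hy i) (hxy i)

lemma ne_zero_of_forall_intCast_eq_sub (hD : ∀ d ∈ D, ∀ i, 0 ≤ d i ∧ d i < n i)
    {x y δ : Fin m → ℤ} (hx : x ∈ D) (hy : y ∈ D) (hxy : x ≠ y)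
    (hδ : ∀ i, (δ i : ZMod (n i)) = ((y i - x i : ℤ) : ZMod (n i))) : δ ≠ 0 := by
  rintro rfl
  refine hxy (eq_of_forall_intCast_zmod_eq hD hx hy fun i => ?_)
  have e := hδ i
  push_cast [Pi.zero_apply] at e
  linear_combination e

lemma fst_ne_of_forall_intCast_sub_eq (hD : ∀ d ∈ D, ∀ i, 0 ≤ d i ∧ d i < n i)
    {x₁ y₁ x₂ y₂ : Fin m → ℤ} (hy₁ : y₁ ∈ D) (hy₂ : y₂ ∈ D)
    (hne : (x₁, y₁) ≠ (x₂, y₂))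
    (hxy : ∀ i, ((y₁ i - x₁ i : ℤ) : ZMod (n i)) = ((y₂ i - x₂ i : ℤ) : ZMod (n i))) :
    x₁ ≠ x₂ := by
  rintro rfl
  refine hne (Prod.ext rfl (eq_of_forall_intCast_zmod_eq hD hy₁ hy₂ fun i => ?_))
  have e := hxy i
  push_cast at e
  linear_combination e

end Box

namespace ZMod

variable {n : ℕ} [NeZero n]

lemma valMinAbs_intCast_mul_two_ne {h : ℤ} (h0 : 0 ≤ h) (hlt : h < n) (hne : 2 * h ≠ n) :
    (h : ZMod n).valMinAbs * 2 ≠ n := by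
  rw [Ne, valMinAbs_mul_two_eq_iff, ← Nat.cast_inj (R := ℤ)]
  push_cast
  rwa [val_intCast, Int.emod_eq_of_lt h0 hlt]

lemma abs_valMinAbs_add_abs_valMinAbs_lt (a b : ZMod n) (hb : b.valMinAbs * 2 ≠ n) :
    |a.valMinAbs| + |b.valMinAbs| < n := by
  have ha := valMinAbs_mem_Ioc a
  have hb' := valMinAbs_mem_Ioc b
  rw [Set.mem_Ioc] at ha hb'
  cases abs_cases a.valMinAbs <;> cases abs_cases b.valMinAbs <;> omega

end ZMod

lemma exists_inWindow_parallelogram {m : ℕ} {n : Fin m → ℕ} (a s δ : Fin m → ℤ)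
    (hsδ : ∀ i, |s i| + |δ i| < n i) :
    ∃ κ, InWindow m n κ a ∧ InWindow m n κ (a + s) ∧ InWindow m n κ (a + δ) ∧
      InWindow m n κ (a + s + δ) := by
  refine ⟨fun i => a i + min (s i) 0 + min (δ i) 0, ?_, ?_, ?_, ?_⟩ <;> intro i <;>
    have := hsδ i <;> simp only [Pi.add_apply] <;>
    constructor <;> cases abs_cases (s i) <;> cases abs_cases (δ i) <;> omega

theorem repeated_toroidal_implies_repeated_difference_general
    (m : ℕ) (n : Fin m → ℕ)
    (D : Finset (Fin m → ℤ)) (hD : ∀ d ∈ D, ∀ i, 0 ≤ d i ∧ d i < (n i : ℤ))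
    (h : Fin m → ℤ) (hh : ∀ i, 0 ≤ h i ∧ h i < (n i : ℤ) ∧ 2 * h i ≠ (n i : ℤ))
    (α₁ ω₁ α₂ ω₂ : Fin m → ℤ)
    (hα₁ : α₁ ∈ D) (hω₁ : ω₁ ∈ D) (hα₂ : α₂ ∈ D) (hω₂ : ω₂ ∈ D)
    (h₁ : α₁ ≠ ω₁) (hpairs : (α₁, ω₁) ≠ (α₂, ω₂))
    (ht₁ : ∀ i, ((ω₁ i - α₁ i : ℤ) : ZMod (n i)) = ((h i : ℤ) : ZMod (n i)))
    (ht₂ : ∀ i, ((ω₂ i - α₂ i : ℤ) : ZMod (n i)) = ((h i : ℤ) : ZMod (n i))) :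
    ∃ κ α₁' ω₁' α₂' ω₂' : Fin m → ℤ,
      InWindow m n κ α₁' ∧ InWindow m n κ ω₁' ∧ InWindow m n κ α₂' ∧ InWindow m n κ ω₂' ∧
      IsExtDot m n D α₁' ∧ IsExtDot m n D ω₁' ∧ IsExtDot m n D α₂' ∧ IsExtDot m n D ω₂' ∧
      α₁' ≠ ω₁' ∧ α₂' ≠ ω₂' ∧ (α₁', ω₁') ≠ (α₂', ω₂') ∧
      ω₁' - α₁' = ω₂' - α₂' := by
  have _ : ∀ i, NeZero (n i) := fun i => ⟨by have := hh i; omega⟩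
  set δ : Fin m → ℤ := fun i => (h i : ZMod (n i)).valMinAbs
  set s : Fin m → ℤ := fun i => ((α₂ i - α₁ i : ℤ) : ZMod (n i)).valMinAbs
  have hδ (i : Fin m) : (δ i : ZMod (n i)) = h i := ZMod.coe_valMinAbs _
  have hs (i : Fin m) : (s i : ZMod (n i)) = ((α₂ i - α₁ i : ℤ) : ZMod (n i)) :=
    ZMod.coe_valMinAbs _
  have hδ0 : δ ≠ 0 :=
    ne_zero_of_forall_intCast_eq_sub hD hα₁ hω₁ h₁ fun i => (hδ i).trans (ht₁ i).symm
  have hs0 : s ≠ 0 := ne_zero_of_forall_intCast_eq_sub hD hα₁ hα₂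
    (fst_ne_of_forall_intCast_sub_eq hD hω₁ hω₂ hpairs fun i => (ht₁ i).trans (ht₂ i).symm)
    hs
  obtain ⟨κ, hwα₁, hwα₂, hwω₁, hwω₂⟩ := exists_inWindow_parallelogram α₁ s δ fun i =>
    ZMod.abs_valMinAbs_add_abs_valMinAbs_lt _ _
      (ZMod.valMinAbs_intCast_mul_two_ne (hh i).1 (hh i).2.1 (hh i).2.2)
  refine ⟨κ, α₁, α₁ + δ, α₁ + s, α₁ + s + δ, hwα₁, hwω₁, hwα₂, hwω₂,
    ⟨α₁, hα₁, fun _ => rfl⟩, ⟨ω₁, hω₁, fun i => ?_⟩, ⟨α₂, hα₂, fun i => ?_⟩,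
    ⟨ω₂, hω₂, fun i => ?_⟩, by simpa using hδ0, by simpa using hδ0,
    fun hq => hs0 (by simpa using congrArg Prod.fst hq), by abel⟩
  · have e := ht₁ i
    push_cast [Pi.add_apply, hδ] at e ⊢
    linear_combination -e
  · push_cast [Pi.add_apply, hs]
    ring
  · have e := ht₂ i
    push_cast [Pi.add_apply, hs, hδ] at e ⊢
    linear_combination -e

/-- If an `m`-dimensional binary array `A` of size `n 1 × ⋯ × n m`
has a repeated toroidal vector `(h 1, …, h m)` with `h i ≠ n i / 2` for every `i`,
then some `n 1 × ⋯ × n m` window of the periodic extension of `A` contains four dots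
`α₁', ω₁', α₂', ω₂'` forming two distinct ordered pairs with equal difference
vectors `ω₁' - α₁' = ω₂' - α₂'`. -/
theorem repeated_toroidal_implies_repeated_difference
    (m : ℕ) (n : Fin m → ℕ) (hn : ∀ i, 2 ≤ n i)
    (D : Finset (Fin m → ℤ)) (hD : ∀ d ∈ D, ∀ i, 0 ≤ d i ∧ d i < (n i : ℤ))
    (h : Fin m → ℤ) (hh : ∀ i, 0 ≤ h i ∧ h i < (n i : ℤ) ∧ 2 * h i ≠ (n i : ℤ))
    (α₁ ω₁ α₂ ω₂ : Fin m → ℤ)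
    (hα₁ : α₁ ∈ D) (hω₁ : ω₁ ∈ D) (hα₂ : α₂ ∈ D) (hω₂ : ω₂ ∈ D)
    (h₁ : α₁ ≠ ω₁) (h₂ : α₂ ≠ ω₂) (hpairs : (α₁, ω₁) ≠ (α₂, ω₂))
    (ht₁ : ∀ i, ((ω₁ i - α₁ i : ℤ) : ZMod (n i)) = ((h i : ℤ) : ZMod (n i)))
    (ht₂ : ∀ i, ((ω₂ i - α₂ i : ℤ) : ZMod (n i)) = ((h i : ℤ) : ZMod (n i))) :
    ∃ κ α₁' ω₁' α₂' ω₂' : Fin m → ℤ,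
      InWindow m n κ α₁' ∧ InWindow m n κ ω₁' ∧ InWindow m n κ α₂' ∧ InWindow m n κ ω₂' ∧
      IsExtDot m n D α₁' ∧ IsExtDot m n D ω₁' ∧ IsExtDot m n D α₂' ∧ IsExtDot m n D ω₂' ∧
      α₁' ≠ ω₁' ∧ α₂' ≠ ω₂' ∧ (α₁', ω₁') ≠ (α₂', ω₂') ∧
      ω₁' - α₁' = ω₂' - α₂' :=
  repeated_toroidal_implies_repeated_difference_general m n D hD h hh α₁ ω₁ α₂ ω₂ hα₁ hω₁ hα₂ hω₂ h₁
    hpairs ht₁ ht₂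
end

section
/- An m-dimensional permutation array of order n > 1 has n(n-1) ordered toroidal vectors (counting multiplicity) but only (n-1)^2 admissible values, hence by pigeonhole it has at least one repeated toroidal vector. Consequently, multidimensional modular Costas arrays do not exist. -/
/-!
Identify each grid `[n₁] × ⋯ × [n_k]` with the finite abelian group `∏ ZMod nᵢ`, so that toroidal
vectors become group differences. Fix a nonzero shift `d`. Each of the `N` dots `x` gives the pair
`(x, x + d)`, whose toroidal vector is `d` in the first factor and a nonzero difference in the second
factor, which has only `N - 1` nonzero elements. By pigeonhole two of these `N` pairs share their
toroidal vector.
-/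

open Function Fintype

theorem ZMod.finEquiv_apply (n : ℕ) [NeZero n] (a : Fin n) :
    ZMod.finEquiv n a = ((a : ℕ) : ZMod n) := by
  obtain ⟨m, rfl⟩ := Nat.exists_eq_succ_of_ne_zero (NeZero.ne n)
  exact (Fin.cast_val_eq_self a).symm

theorem exists_ne_map_add_sub_eq {G H : Type*} [AddGroup G] [AddGroup H] [Fintype G]
    [Fintype H] [Nontrivial G] {f : G → H} (hf : Injective f) (hcard : card H ≤ card G) :
    ∃ d ≠ 0, ∃ x₁ x₂, x₁ ≠ x₂ ∧ f (d + x₁) - f x₁ = f (d + x₂) - f x₂ := by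
  classical
  obtain ⟨d, hd⟩ := exists_ne (0 : G)
  have hdiff (x : G) : f (d + x) - f x ≠ 0 := by
    rw [sub_ne_zero, hf.ne_iff]
    simpa using hd
  have hlt : card {h : H // h ≠ 0} < card G := by
    rw [card_subtype_compl, card_subtype_eq]
    have := card_pos (α := G)
    omega
  obtain ⟨x₁, x₂, hne, heq⟩ :=
    exists_ne_map_eq_of_card_lt (fun x => (⟨f (d + x) - f x, hdiff x⟩ : {h : H // h ≠ 0})) hlt
  exact ⟨d, hd, x₁, x₂, hne, congrArg Subtype.val heq⟩

theorem no_modular_costas_general (k l : ℕ) (n₁ : Fin k → ℕ) (n₂ : Fin l → ℕ)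
    (φ : ((i : Fin k) → Fin (n₁ i)) ≃ ((j : Fin l) → Fin (n₂ j)))
    (hN : 1 < ∏ i, n₁ i) :
    ∃ x₁ y₁ x₂ y₂ : (i : Fin k) → Fin (n₁ i),
      x₁ ≠ y₁ ∧ x₂ ≠ y₂ ∧ (x₁, y₁) ≠ (x₂, y₂) ∧
      (∀ i, (((y₁ i : ℤ) - (x₁ i : ℤ)) : ZMod (n₁ i))
          = (((y₂ i : ℤ) - (x₂ i : ℤ)) : ZMod (n₁ i))) ∧
      (∀ j, (((φ y₁ j : ℤ) - (φ x₁ j : ℤ)) : ZMod (n₂ j))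
          = (((φ y₂ j : ℤ) - (φ x₂ j : ℤ)) : ZMod (n₂ j))) := by
  have hdots : Nontrivial ((i : Fin k) → Fin (n₁ i)) := by
    rw [← one_lt_card_iff_nontrivial]
    simpa using hN
  obtain ⟨x₀⟩ : Nonempty ((i : Fin k) → Fin (n₁ i)) := inferInstance
  have (i : Fin k) : NeZero (n₁ i) := .of_pos (x₀ i).pos
  have (j : Fin l) : NeZero (n₂ j) := .of_pos (φ x₀ j).pos
  let e₁ := Equiv.piCongrRight fun i => (ZMod.finEquiv (n₁ i)).toEquiv
  let e₂ := Equiv.piCongrRight fun j => (ZMod.finEquiv (n₂ j)).toEquiv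
  let F := e₁.symm.trans (φ.trans e₂)
  have := e₁.symm.nontrivial
  obtain ⟨d, hd, g₁, g₂, hg, hF⟩ := exists_ne_map_add_sub_eq F.injective (card_congr F).ge
  refine ⟨e₁.symm g₁, e₁.symm (d + g₁), e₁.symm g₂, e₁.symm (d + g₂), ?_, ?_, ?_, ?_, ?_⟩
  · simpa using hd
  · simpa using hd
  · simpa using hg
  · intro i
    simp only [Int.cast_natCast, ← ZMod.finEquiv_apply]
    simp [e₁]
  · intro j
    simp only [Int.cast_natCast, ← ZMod.finEquiv_apply]
    simpa [F, e₁, e₂] using congrFun hF j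

/-- An `m`-dimensional permutation array of order `N > 1`
(defined by a bijection `φ`, dots `(x, φ x)`) has `N(N-1)` ordered toroidal vectors
taking only `(N-1)²` admissible values, hence some toroidal vector is repeated:
two distinct ordered pairs of distinct dots have equal toroidal vectors.
Consequently, multidimensional modular Costas arrays do not exist. -/
theorem no_modular_costas (k l : ℕ) (n₁ : Fin k → ℕ) (n₂ : Fin l → ℕ)
    (hn₁ : ∀ i, 2 ≤ n₁ i) (hn₂ : ∀ j, 2 ≤ n₂ j)
    (φ : ((i : Fin k) → Fin (n₁ i)) ≃ ((j : Fin l) → Fin (n₂ j)))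
    (hN : 1 < ∏ i, n₁ i) :
    ∃ x₁ y₁ x₂ y₂ : (i : Fin k) → Fin (n₁ i),
      x₁ ≠ y₁ ∧ x₂ ≠ y₂ ∧ (x₁, y₁) ≠ (x₂, y₂) ∧
      (∀ i, (((y₁ i : ℤ) - (x₁ i : ℤ)) : ZMod (n₁ i))
          = (((y₂ i : ℤ) - (x₂ i : ℤ)) : ZMod (n₁ i))) ∧
      (∀ j, (((φ y₁ j : ℤ) - (φ x₁ j : ℤ)) : ZMod (n₂ j))
          = (((φ y₂ j : ℤ) - (φ x₂ j : ℤ)) : ZMod (n₂ j))) :=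
  no_modular_costas_general k l n₁ n₂ φ hN
end

section
/- Let A be an m-dimensional permutation array of order n with index set Λ = [n_1] × ⋯ × [n_m]. If |𝓗_A| - |H_Λ| < n - 1, then A has a repeated toroidal vector (h_1,...,h_m) with h_i ≠ n_i/2 for all i ∈ [m]. -/
set_option maxHeartbeats 1600000

open scoped Classical

/-- The half-length element `q/2` of `ℤ_q`. -/
def halfElt (q : ℕ) : ZMod q := ((q / 2 : ℕ) : ZMod q)

lemma fin_eq_of_sub_cast_zero {q : ℕ} (x y : Fin q)
    (h : (((y : ℤ) - (x : ℤ)) : ZMod q) = 0) : x = y := by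
  have h2 : (((y : ℤ) : ZMod q)) = (((x : ℤ) : ZMod q)) := by
    have : (((y : ℤ) : ZMod q)) - (((x : ℤ) : ZMod q)) = 0 := h
    exact sub_eq_zero.mp this
  have hmod : (y : ℤ) ≡ (x : ℤ) [ZMOD (q : ℕ)] := (ZMod.intCast_eq_intCast_iff _ _ _).mp h2
  have hd : (q : ℤ) ∣ ((y : ℤ) - (x : ℤ)) := by
    have := Int.ModEq.dvd hmod
    exact dvd_sub_comm.mp this
  have hx := x.isLt
  have hy := y.isLt
  have h0 : (y : ℤ) - (x : ℤ) = 0 := by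
    refine Int.eq_zero_of_abs_lt_dvd hd ?_
    rw [abs_sub_lt_iff]
    omega
  have : (x : ℕ) = (y : ℕ) := by omega
  exact Fin.ext this

/-- The "half-component" predicate on pairs of dots. -/
def hpPred {k l : ℕ} (n₁ : Fin k → ℕ) (n₂ : Fin l → ℕ)
    (φ : ((i : Fin k) → Fin (n₁ i)) ≃ ((j : Fin l) → Fin (n₂ j)))
    (p : ((i : Fin k) → Fin (n₁ i)) × ((i : Fin k) → Fin (n₁ i))) : Prop :=
  (∃ a, Even (n₁ a) ∧ (((p.2 a : ℤ) - (p.1 a : ℤ)) : ZMod (n₁ a)) = halfElt (n₁ a)) ∨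
  (∃ b, Even (n₂ b) ∧ (((φ p.2 b : ℤ) - (φ p.1 b : ℤ)) : ZMod (n₂ b)) = halfElt (n₂ b))

/-- The "half-component" predicate on toroidal vectors. -/
def hvPred {k l : ℕ} (n₁ : Fin k → ℕ) (n₂ : Fin l → ℕ)
    (v : ((i : Fin k) → ZMod (n₁ i)) × ((j : Fin l) → ZMod (n₂ j))) : Prop :=
  (∃ a, Even (n₁ a) ∧ v.1 a = halfElt (n₁ a)) ∨ (∃ b, Even (n₂ b) ∧ v.2 b = halfElt (n₂ b))

/-- Let `A` be an `m`-dimensional permutation array of order `N`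
(defined by a bijection `φ`, dots `(x, φ x)`).  Let `|𝓗_A|` be the number of toroidal
vectors of `A` (counted over ordered pairs of distinct dots) having some component `i`
equal to `n_i / 2` (with `n_i` even), and let `|H_Λ|` be the number of admissible
toroidal vectors (nonzero projections to both blocks) having some such half component.
If `|𝓗_A| - |H_Λ| < N - 1`, then `A` has a repeated toroidal vector with no component
equal to `n_i / 2`. -/
theorem pigeonhole_half_vectors (k l : ℕ) (n₁ : Fin k → ℕ) (n₂ : Fin l → ℕ) (N : ℕ)
    (hn₁ : ∀ i, 2 ≤ n₁ i) (hn₂ : ∀ j, 2 ≤ n₂ j)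
    (h₁ : ∏ i, n₁ i = N) (h₂ : ∏ j, n₂ j = N)
    (φ : ((i : Fin k) → Fin (n₁ i)) ≃ ((j : Fin l) → Fin (n₂ j)))
    (hcard :
      ((Finset.univ.filter
          (fun p : ((i : Fin k) → Fin (n₁ i)) × ((i : Fin k) → Fin (n₁ i)) =>
            p.1 ≠ p.2 ∧
              ((∃ a, Even (n₁ a) ∧
                  (((p.2 a : ℤ) - (p.1 a : ℤ)) : ZMod (n₁ a)) = halfElt (n₁ a)) ∨
               (∃ b, Even (n₂ b) ∧
                  (((φ p.2 b : ℤ) - (φ p.1 b : ℤ)) : ZMod (n₂ b)) = halfElt (n₂ b))))).card : ℤ)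
        - ({v : ((i : Fin k) → ZMod (n₁ i)) × ((j : Fin l) → ZMod (n₂ j)) |
              v.1 ≠ 0 ∧ v.2 ≠ 0 ∧
              ((∃ a, Even (n₁ a) ∧ v.1 a = halfElt (n₁ a)) ∨
               (∃ b, Even (n₂ b) ∧ v.2 b = halfElt (n₂ b)))}.ncard : ℤ)
        < (N : ℤ) - 1) :
    ∃ x₁ y₁ x₂ y₂ : (i : Fin k) → Fin (n₁ i),
      x₁ ≠ y₁ ∧ x₂ ≠ y₂ ∧ (x₁, y₁) ≠ (x₂, y₂) ∧
      (∀ i, (((y₁ i : ℤ) - (x₁ i : ℤ)) : ZMod (n₁ i))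
          = (((y₂ i : ℤ) - (x₂ i : ℤ)) : ZMod (n₁ i))) ∧
      (∀ j, (((φ y₁ j : ℤ) - (φ x₁ j : ℤ)) : ZMod (n₂ j))
          = (((φ y₂ j : ℤ) - (φ x₂ j : ℤ)) : ZMod (n₂ j))) ∧
      (∀ a, ¬(Even (n₁ a) ∧
          (((y₁ a : ℤ) - (x₁ a : ℤ)) : ZMod (n₁ a)) = halfElt (n₁ a))) ∧
      (∀ b, ¬(Even (n₂ b) ∧
          (((φ y₁ b : ℤ) - (φ x₁ b : ℤ)) : ZMod (n₂ b)) = halfElt (n₂ b))) := by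
  classical
  haveI inst1 : ∀ i, NeZero (n₁ i) := fun i => ⟨by have := hn₁ i; omega⟩
  haveI inst2 : ∀ j, NeZero (n₂ j) := fun j => ⟨by have := hn₂ j; omega⟩
  -- restate the hypothesis with the abbreviated predicates (definitially equal)
  have efil : (Finset.univ.filter
      (fun p : ((i : Fin k) → Fin (n₁ i)) × ((i : Fin k) → Fin (n₁ i)) =>
        p.1 ≠ p.2 ∧
          ((∃ a, Even (n₁ a) ∧
              (((p.2 a : ℤ) - (p.1 a : ℤ)) : ZMod (n₁ a)) = halfElt (n₁ a)) ∨
           (∃ b, Even (n₂ b) ∧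
              (((φ p.2 b : ℤ) - (φ p.1 b : ℤ)) : ZMod (n₂ b)) = halfElt (n₂ b))))) =
      (Finset.univ.filter
      (fun p : ((i : Fin k) → Fin (n₁ i)) × ((i : Fin k) → Fin (n₁ i)) =>
        p.1 ≠ p.2 ∧ hpPred n₁ n₂ φ p)) := by
    ext p
    simp only [Finset.mem_filter]
    exact Iff.rfl
  rw [efil] at hcard
  replace hcard :
      ((Finset.univ.filter
          (fun p : ((i : Fin k) → Fin (n₁ i)) × ((i : Fin k) → Fin (n₁ i)) =>
            p.1 ≠ p.2 ∧ hpPred n₁ n₂ φ p)).card : ℤ)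
        - ({v : ((i : Fin k) → ZMod (n₁ i)) × ((j : Fin l) → ZMod (n₂ j)) |
              v.1 ≠ 0 ∧ v.2 ≠ 0 ∧ hvPred n₁ n₂ v}.ncard : ℤ)
        < (N : ℤ) - 1 := hcard
  clear efil
  set HA := Finset.univ.filter
      (fun p : ((i : Fin k) → Fin (n₁ i)) × ((i : Fin k) → Fin (n₁ i)) =>
        p.1 ≠ p.2 ∧ hpPred n₁ n₂ φ p) with hHA
  set P := Finset.univ.filter
      (fun p : ((i : Fin k) → Fin (n₁ i)) × ((i : Fin k) → Fin (n₁ i)) =>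
        p.1 ≠ p.2 ∧ ¬ hpPred n₁ n₂ φ p) with hP
  set D := Finset.univ.filter
      (fun p : ((i : Fin k) → Fin (n₁ i)) × ((i : Fin k) → Fin (n₁ i)) => p.1 ≠ p.2) with hD
  set Adm := Finset.univ.filter
      (fun v : ((i : Fin k) → ZMod (n₁ i)) × ((j : Fin l) → ZMod (n₂ j)) =>
        v.1 ≠ 0 ∧ v.2 ≠ 0) with hAdm
  set HV := Finset.univ.filter
      (fun v : ((i : Fin k) → ZMod (n₁ i)) × ((j : Fin l) → ZMod (n₂ j)) =>
        v.1 ≠ 0 ∧ v.2 ≠ 0 ∧ hvPred n₁ n₂ v) with hHV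
  set TV := Finset.univ.filter
      (fun v : ((i : Fin k) → ZMod (n₁ i)) × ((j : Fin l) → ZMod (n₂ j)) =>
        v.1 ≠ 0 ∧ v.2 ≠ 0 ∧ ¬ hvPred n₁ n₂ v) with hTV
  have hN1 : 1 ≤ N := by
    rw [← h₁]
    exact Finset.one_le_prod' (fun i _ => by have := hn₁ i; omega)
  have cardα : Fintype.card ((i : Fin k) → Fin (n₁ i)) = N := by
    simp only [Fintype.card_pi, Fintype.card_fin]; exact h₁
  have cardV1 : Fintype.card ((i : Fin k) → ZMod (n₁ i)) = N := by
    simp only [Fintype.card_pi, ZMod.card]; exact h₁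
  have cardV2 : Fintype.card ((j : Fin l) → ZMod (n₂ j)) = N := by
    simp only [Fintype.card_pi, ZMod.card]; exact h₂
  -- cardinalities of the two "ambient" sets
  have hDcard : D.card = N * N - N := by
    have hd2 : D = (Finset.univ : Finset ((i : Fin k) → Fin (n₁ i))).offDiag := by
      rw [hD]; ext p; simp [Finset.mem_offDiag]
    rw [hd2, Finset.offDiag_card, Finset.card_univ, cardα]
  have hAdmcard : Adm.card = (N - 1) * (N - 1) := by
    have ha2 : Adm = ((Finset.univ : Finset ((i : Fin k) → ZMod (n₁ i))).filter (fun x => x ≠ 0)) ×ˢ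
        ((Finset.univ : Finset ((j : Fin l) → ZMod (n₂ j))).filter (fun x => x ≠ 0)) := by
      rw [hAdm, ← Finset.filter_product, Finset.univ_product_univ]
    rw [ha2, Finset.card_product, Finset.filter_ne', Finset.filter_ne',
      Finset.card_erase_of_mem (Finset.mem_univ _), Finset.card_erase_of_mem (Finset.mem_univ _),
      Finset.card_univ, Finset.card_univ, cardV1, cardV2]
  -- splittings
  have hsub1 : HA ⊆ D := by
    intro p hmem
    simp only [hHA, hD, Finset.mem_filter] at *
    exact ⟨hmem.1, hmem.2.1⟩
  have hPcard : P.card = D.card - HA.card := by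
    have hPeq : P = D \ HA := by
      ext p
      simp only [hP, hD, hHA, Finset.mem_filter, Finset.mem_sdiff, Finset.mem_univ, true_and]
      tauto
    rw [hPeq, Finset.card_sdiff_of_subset hsub1]
  have hsub2 : HV ⊆ Adm := by
    intro v hmem
    simp only [hHV, hAdm, Finset.mem_filter] at *
    exact ⟨hmem.1, hmem.2.1, hmem.2.2.1⟩
  have hTVcard : TV.card = Adm.card - HV.card := by
    have hTVeq : TV = Adm \ HV := by
      ext v
      simp only [hTV, hAdm, hHV, Finset.mem_filter, Finset.mem_sdiff, Finset.mem_univ, true_and]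
      tauto
    rw [hTVeq, Finset.card_sdiff_of_subset hsub2]
  -- identify the ncard with HV.card
  have hncard : ({v : ((i : Fin k) → ZMod (n₁ i)) × ((j : Fin l) → ZMod (n₂ j)) |
              v.1 ≠ 0 ∧ v.2 ≠ 0 ∧ hvPred n₁ n₂ v}.ncard) = HV.card := by
    rw [Set.ncard_eq_toFinset_card', hHV]
    simp only [Set.toFinset_setOf]
  -- the counting inequality
  have hlt : TV.card < P.card := by
    have e1 : (P.card : ℤ) = (D.card : ℤ) - HA.card := by
      rw [hPcard]
      exact_mod_cast Nat.cast_sub (Finset.card_le_card hsub1)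
    have e2 : (TV.card : ℤ) = (Adm.card : ℤ) - HV.card := by
      rw [hTVcard]
      exact_mod_cast Nat.cast_sub (Finset.card_le_card hsub2)
    have e3 : (D.card : ℤ) = (N : ℤ) * N - N := by
      have hle : N ≤ N * N := Nat.le_mul_of_pos_left N (by omega)
      rw [hDcard]
      push_cast [Nat.cast_sub hle]
      ring
    have e4 : (Adm.card : ℤ) = ((N : ℤ) - 1) * ((N : ℤ) - 1) := by
      rw [hAdmcard]
      push_cast [Nat.cast_sub hN1]
      ring
    have hc : (HA.card : ℤ) - HV.card < (N : ℤ) - 1 := by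
      rw [hncard] at hcard
      exact hcard
    have : (TV.card : ℤ) < (P.card : ℤ) := by
      rw [e1, e2, e3, e4]
      nlinarith [hc]
    exact_mod_cast this
  -- the toroidal vector map
  have hmaps : ∀ p ∈ P,
      ((fun i => (((p.2 i : ℤ) - (p.1 i : ℤ)) : ZMod (n₁ i)),
        fun j => (((φ p.2 j : ℤ) - (φ p.1 j : ℤ)) : ZMod (n₂ j))) :
        ((i : Fin k) → ZMod (n₁ i)) × ((j : Fin l) → ZMod (n₂ j))) ∈ TV := by
    intro p hmem
    simp only [hP, Finset.mem_filter, Finset.mem_univ, true_and] at hmem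
    obtain ⟨hne, hnh⟩ := hmem
    simp only [hTV, Finset.mem_filter, Finset.mem_univ, true_and]
    refine ⟨?_, ?_, ?_⟩
    · intro h0
      apply hne
      funext i
      exact fin_eq_of_sub_cast_zero _ _ (congrFun h0 i)
    · intro h0
      apply hne
      apply φ.injective
      funext j
      exact fin_eq_of_sub_cast_zero _ _ (congrFun h0 j)
    · exact fun h => hnh h
  obtain ⟨p, hpP, q, hqP, hpq, hfeq⟩ :=
    Finset.exists_ne_map_eq_of_card_lt_of_maps_to hlt hmaps
  have hp1 : p.1 ≠ p.2 ∧ ¬ hpPred n₁ n₂ φ p := by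
    simpa only [hP, Finset.mem_filter, Finset.mem_univ, true_and] using hpP
  have hq1 : q.1 ≠ q.2 ∧ ¬ hpPred n₁ n₂ φ q := by
    simpa only [hP, Finset.mem_filter, Finset.mem_univ, true_and] using hqP
  refine ⟨p.1, p.2, q.1, q.2, hp1.1, hq1.1, ?_, ?_, ?_, ?_, ?_⟩
  · intro h
    exact hpq (Prod.ext (congrArg Prod.fst h) (congrArg Prod.snd h))
  · intro i
    exact congrFun (congrArg Prod.fst hfeq) i
  · intro j
    exact congrFun (congrArg Prod.snd hfeq) j
  · intro a ha
    exact hp1.2 (Or.inl ⟨a, ha.1, ha.2⟩)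
  · intro b hb
    exact hp1.2 (Or.inr ⟨b, hb.1, hb.2⟩)
end

section
/- If A is an m-dimensional permutation array of odd order n with all n_i odd, then A has at least one repeated toroidal vector, and moreover there is a window of size n_1 × ⋯ × n_m in the periodic extension of A containing a repeated difference vector. In particular, multidimensional Costas arrays of odd order are not periodic Costas. -/
/-!
Pigeonhole: the `N (N - 1)` ordered pairs of distinct dots of a permutation array of order
`N ≥ 2` have toroidal vectors with no zero block on either side, and there are only
`(N - 1)²` such vectors, so two pairs share one.  When all sides are odd, every residue
`c` modulo `n` has a lift `d` with `2 |d| < n`; two arcs of length `|d|` on a circle of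
length `n` then lie, after lifting, in one window of length `n`, which turns the repeated
toroidal vector into a repeated difference vector inside a single window.
-/

/-- `α` is a dot of the periodic extension of the permutation array defined by `φ`. -/
def IsExtDotPerm (k l : ℕ) (n₁ : Fin k → ℕ) (n₂ : Fin l → ℕ)
    (φ : ((i : Fin k) → Fin (n₁ i)) ≃ ((j : Fin l) → Fin (n₂ j)))
    (α : ((i : Fin k) → ℤ) × ((j : Fin l) → ℤ)) : Prop :=
  ∃ x : (i : Fin k) → Fin (n₁ i),
    (∀ a, (α.1 a : ZMod (n₁ a)) = ((x a : ℕ) : ZMod (n₁ a))) ∧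
    (∀ b, (α.2 b : ZMod (n₂ b)) = ((φ x b : ℕ) : ZMod (n₂ b)))

/-- `α` lies in the `n₁ 1 × ⋯ × n₂ l` window based at `κ`. -/
def InWindowPerm (k l : ℕ) (n₁ : Fin k → ℕ) (n₂ : Fin l → ℕ)
    (κ α : ((i : Fin k) → ℤ) × ((j : Fin l) → ℤ)) : Prop :=
  (∀ a, κ.1 a ≤ α.1 a ∧ α.1 a < κ.1 a + (n₁ a : ℤ)) ∧
  (∀ b, κ.2 b ≤ α.2 b ∧ α.2 b < κ.2 b + (n₂ b : ℤ))

open Finset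

section Window

variable {n : ℕ}

lemma exists_window_lifts [NeZero n] {d : ℤ} (hd : 2 * |d| < n) (a₁ a₂ : ZMod n) :
    ∃ κ u₁ u₂ : ℤ, (u₁ : ZMod n) = a₁ ∧ (u₂ : ZMod n) = a₂ ∧
      u₁ ∈ Set.Ico κ (κ + n) ∧ u₁ + d ∈ Set.Ico κ (κ + n) ∧
      u₂ ∈ Set.Ico κ (κ + n) ∧ u₂ + d ∈ Set.Ico κ (κ + n) := by
  set r : ℤ := (a₁.val : ℤ)
  set g : ℤ := ((a₂ - a₁).val : ℤ)
  have hr : (r : ZMod n) = a₁ := by simp [r]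
  have hg : ((r + g : ℤ) : ZMod n) = a₂ := by simp [r, g]
  have hgn : g < n := Nat.cast_lt.mpr (ZMod.val_lt _)
  have hg0 : 0 ≤ g := by positivity
  have := le_abs_self d
  have := neg_abs_le d
  simp only [Set.mem_Ico]
  by_cases hfit : g + |d| < n
  · exact ⟨r + min 0 d, r, r + g, hr, hg, by omega⟩
  · -- here `g > |d|`, so the first arc fits after the second one once shifted by `n`
    refine ⟨r + g + min 0 d, r + n, r + g, by simpa using hr, hg, by omega⟩

lemma exists_window_of_sub_eq (hn : Odd n) {a₁ b₁ a₂ b₂ : ZMod n} (h : b₁ - a₁ = b₂ - a₂) :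
    ∃ κ u₁ u₂ d : ℤ,
      (u₁ : ZMod n) = a₁ ∧ ((u₁ + d : ℤ) : ZMod n) = b₁ ∧
      (u₂ : ZMod n) = a₂ ∧ ((u₂ + d : ℤ) : ZMod n) = b₂ ∧
      u₁ ∈ Set.Ico κ (κ + n) ∧ u₁ + d ∈ Set.Ico κ (κ + n) ∧
      u₂ ∈ Set.Ico κ (κ + n) ∧ u₂ + d ∈ Set.Ico κ (κ + n) := by
  have : NeZero n := ⟨hn.pos.ne'⟩
  set d := (b₁ - a₁).valMinAbs
  have hd : 2 * |d| < n := by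
    have := ZMod.natAbs_valMinAbs_le (b₁ - a₁)
    rw [Int.abs_eq_natAbs]
    have := Nat.odd_iff.mp hn
    omega
  have hd_cast : (d : ZMod n) = b₁ - a₁ := ZMod.coe_valMinAbs _
  obtain ⟨κ, u₁, u₂, hu₁, hu₂, hwin⟩ := exists_window_lifts hd a₁ a₂
  refine ⟨κ, u₁, u₂, d, hu₁, ?_, hu₂, ?_, hwin⟩
  · push_cast; rw [hu₁, hd_cast]; ring
  · push_cast; rw [hu₂, hd_cast, h]; ring

end Window

lemma natCast_fin_inj {m : ℕ} {a b : Fin m} : ((a : ℕ) : ZMod m) = (b : ℕ) ↔ a = b := by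
  rw [ZMod.natCast_eq_natCast_iff', Nat.mod_eq_of_lt a.isLt, Nat.mod_eq_of_lt b.isLt, Fin.val_inj]

section Blocks

variable {k : ℕ} {n : Fin k → ℕ}

def toroidalVector (x y : (i : Fin k) → Fin (n i)) : (i : Fin k) → ZMod (n i) :=
  fun i => (((y i : ℤ) - (x i : ℤ)) : ZMod (n i))

lemma toroidalVector_apply (x y : (i : Fin k) → Fin (n i)) (i : Fin k) :
    toroidalVector x y i = ((y i : ℕ) : ZMod (n i)) - ((x i : ℕ) : ZMod (n i)) := by
  simp [toroidalVector]

lemma toroidalVector_eq_zero_iff {x y : (i : Fin k) → Fin (n i)} : toroidalVector x y = 0 ↔ x = y := by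
  simp only [funext_iff, Pi.zero_apply, toroidalVector_apply, sub_eq_zero, natCast_fin_inj, eq_comm]

def IsLift (n : Fin k → ℕ) (v : Fin k → ℤ) (x : (i : Fin k) → Fin (n i)) : Prop :=
  ∀ i, (v i : ZMod (n i)) = ((x i : ℕ) : ZMod (n i))

def InBox (n : Fin k → ℕ) (κ v : Fin k → ℤ) : Prop :=
  ∀ i, κ i ≤ v i ∧ v i < κ i + n i

lemma IsLift.unique {v : Fin k → ℤ} {x y : (i : Fin k) → Fin (n i)}
    (hx : IsLift n v x) (hy : IsLift n v y) : x = y :=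
  funext fun i => natCast_fin_inj.mp ((hx i).symm.trans (hy i))

lemma exists_box_of_toroidalVector_eq (hodd : ∀ i, Odd (n i)) {x₁ y₁ x₂ y₂ : (i : Fin k) → Fin (n i)}
    (h : toroidalVector x₁ y₁ = toroidalVector x₂ y₂) :
    ∃ κ u₁ u₂ d : Fin k → ℤ,
      IsLift n u₁ x₁ ∧ IsLift n (u₁ + d) y₁ ∧ IsLift n u₂ x₂ ∧ IsLift n (u₂ + d) y₂ ∧
      InBox n κ u₁ ∧ InBox n κ (u₁ + d) ∧ InBox n κ u₂ ∧ InBox n κ (u₂ + d) := by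
  choose κ u₁ u₂ d hx₁ hy₁ hx₂ hy₂ hwin using fun i =>
    exists_window_of_sub_eq (hodd i) (by simpa only [toroidalVector_apply] using congrFun h i)
  exact ⟨κ, u₁, u₂, d, hx₁, hy₁, hx₂, hy₂, fun i => (hwin i).1, fun i => (hwin i).2.1,
    fun i => (hwin i).2.2.1, fun i => (hwin i).2.2.2⟩

end Blocks

lemma card_pi_zmod {k : ℕ} (n : Fin k → ℕ) [∀ i, NeZero (n i)] :
    Fintype.card ((i : Fin k) → ZMod (n i)) = Fintype.card ((i : Fin k) → Fin (n i)) := by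
  simp [Fintype.card_pi, ZMod.card]

lemma le_card_pi_fin {k : ℕ} {n : Fin k → ℕ} (hpos : ∀ i, 0 < n i) (i : Fin k) :
    n i ≤ Fintype.card ((i : Fin k) → Fin (n i)) := by
  simpa [Fintype.card_pi] using single_le_prod' (fun j _ => hpos j) (mem_univ i)

theorem exists_repeated_toroidal_vector {k l : ℕ} {n₁ : Fin k → ℕ} {n₂ : Fin l → ℕ}
    [∀ i, NeZero (n₁ i)] [∀ j, NeZero (n₂ j)]
    (φ : ((i : Fin k) → Fin (n₁ i)) ≃ ((j : Fin l) → Fin (n₂ j)))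
    (hN : 2 ≤ Fintype.card ((i : Fin k) → Fin (n₁ i))) :
    ∃ x₁ y₁ x₂ y₂ : (i : Fin k) → Fin (n₁ i),
      x₁ ≠ y₁ ∧ x₂ ≠ y₂ ∧ (x₁, y₁) ≠ (x₂, y₂) ∧
      toroidalVector x₁ y₁ = toroidalVector x₂ y₂ ∧
      toroidalVector (φ x₁) (φ y₁) = toroidalVector (φ x₂) (φ y₂) := by
  set N := Fintype.card ((i : Fin k) → Fin (n₁ i))
  have hcard₂ : Fintype.card ((j : Fin l) → ZMod (n₂ j)) = N := by
    rw [card_pi_zmod, ← Fintype.card_congr φ]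
  let f (p : ((i : Fin k) → Fin (n₁ i)) × ((i : Fin k) → Fin (n₁ i))) :=
    (toroidalVector p.1 p.2, toroidalVector (φ p.1) (φ p.2))
  let T : Finset (((i : Fin k) → ZMod (n₁ i)) × ((j : Fin l) → ZMod (n₂ j))) :=
    (univ.erase 0) ×ˢ (univ.erase 0)
  have hmaps : Set.MapsTo f ↑(univ : Finset ((i : Fin k) → Fin (n₁ i))).offDiag ↑T := by
    intro p hp
    simp only [coe_offDiag, coe_univ, Set.mem_offDiag, Set.mem_univ, true_and] at hp
    simp [f, T, toroidalVector_eq_zero_iff, hp]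
  have hlt : T.card < (univ : Finset ((i : Fin k) → Fin (n₁ i))).offDiag.card := by
    rw [card_product, card_erase_of_mem (mem_univ _), card_erase_of_mem (mem_univ _), card_univ,
      card_univ, card_pi_zmod, hcard₂, offDiag_card, card_univ, ← Nat.mul_sub_one]
    exact Nat.mul_lt_mul_of_pos_right (by omega) (by omega)
  obtain ⟨p, hp, q, hq, hpq, hfpq⟩ := exists_ne_map_eq_of_card_lt_of_maps_to hlt hmaps
  rw [mem_offDiag] at hp hq
  exact ⟨p.1, p.2, q.1, q.2, hp.2.2, hq.2.2, hpq, congrArg Prod.fst hfpq, congrArg Prod.snd hfpq⟩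

theorem odd_order_not_periodic_costas_general (k l : ℕ) (hk : 0 < k)
    (n₁ : Fin k → ℕ) (n₂ : Fin l → ℕ)
    (hn₁ : ∀ i, 2 ≤ n₁ i)
    (hodd₁ : ∀ i, Odd (n₁ i)) (hodd₂ : ∀ j, Odd (n₂ j))
    (φ : ((i : Fin k) → Fin (n₁ i)) ≃ ((j : Fin l) → Fin (n₂ j))) :
    (∃ x₁ y₁ x₂ y₂ : (i : Fin k) → Fin (n₁ i),
      x₁ ≠ y₁ ∧ x₂ ≠ y₂ ∧ (x₁, y₁) ≠ (x₂, y₂) ∧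
      (∀ i, (((y₁ i : ℤ) - (x₁ i : ℤ)) : ZMod (n₁ i))
          = (((y₂ i : ℤ) - (x₂ i : ℤ)) : ZMod (n₁ i))) ∧
      (∀ j, (((φ y₁ j : ℤ) - (φ x₁ j : ℤ)) : ZMod (n₂ j))
          = (((φ y₂ j : ℤ) - (φ x₂ j : ℤ)) : ZMod (n₂ j)))) ∧
    (∃ κ α₁ ω₁ α₂ ω₂ : ((i : Fin k) → ℤ) × ((j : Fin l) → ℤ),
      InWindowPerm k l n₁ n₂ κ α₁ ∧ InWindowPerm k l n₁ n₂ κ ω₁ ∧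
      InWindowPerm k l n₁ n₂ κ α₂ ∧ InWindowPerm k l n₁ n₂ κ ω₂ ∧
      IsExtDotPerm k l n₁ n₂ φ α₁ ∧ IsExtDotPerm k l n₁ n₂ φ ω₁ ∧
      IsExtDotPerm k l n₁ n₂ φ α₂ ∧ IsExtDotPerm k l n₁ n₂ φ ω₂ ∧
      α₁ ≠ ω₁ ∧ α₂ ≠ ω₂ ∧ (α₁, ω₁) ≠ (α₂, ω₂) ∧
      ω₁ - α₁ = ω₂ - α₂) := by
  have (i : Fin k) : NeZero (n₁ i) := ⟨(hodd₁ i).pos.ne'⟩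
  have (j : Fin l) : NeZero (n₂ j) := ⟨(hodd₂ j).pos.ne'⟩
  obtain ⟨x₁, y₁, x₂, y₂, hxy₁, hxy₂, hne, h₁, h₂⟩ := exists_repeated_toroidal_vector φ
    ((hn₁ ⟨0, hk⟩).trans (le_card_pi_fin (fun i => (hodd₁ i).pos) ⟨0, hk⟩))
  refine ⟨⟨x₁, y₁, x₂, y₂, hxy₁, hxy₂, hne, congrFun h₁, congrFun h₂⟩, ?_⟩
  obtain ⟨κ, u₁, u₂, d, hx₁, hy₁, hx₂, hy₂, hb₁, hb₁', hb₂, hb₂'⟩ :=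
    exists_box_of_toroidalVector_eq hodd₁ h₁
  obtain ⟨κ', v₁, v₂, e, hφx₁, hφy₁, hφx₂, hφy₂, hc₁, hc₁', hc₂, hc₂'⟩ :=
    exists_box_of_toroidalVector_eq hodd₂ h₂
  refine ⟨(κ, κ'), (u₁, v₁), (u₁ + d, v₁ + e), (u₂, v₂), (u₂ + d, v₂ + e),
    ⟨hb₁, hc₁⟩, ⟨hb₁', hc₁'⟩, ⟨hb₂, hc₂⟩, ⟨hb₂', hc₂'⟩, ⟨x₁, hx₁, hφx₁⟩, ⟨y₁, hy₁, hφy₁⟩,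
    ⟨x₂, hx₂, hφx₂⟩, ⟨y₂, hy₂, hφy₂⟩, ?_, ?_, ?_, ?_⟩
  · intro h
    obtain ⟨hu, -⟩ := Prod.mk.inj h
    exact hxy₁ (hx₁.unique (hu ▸ hy₁))
  · intro h
    obtain ⟨hu, -⟩ := Prod.mk.inj h
    exact hxy₂ (hx₂.unique (hu ▸ hy₂))
  · intro h
    simp only [Prod.mk.injEq] at h
    obtain ⟨⟨hu, -⟩, hu', -⟩ := h
    exact hne (Prod.ext (hx₁.unique (hu ▸ hx₂)) (hy₁.unique (hu' ▸ hy₂)))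
  · simp only [Prod.mk_sub_mk, add_sub_cancel_left]

/-- If `A` is an `m`-dimensional permutation array of odd order `N`
with all side lengths `n_i` odd, then `A` has a repeated toroidal vector, and moreover
some window of size `n 1 × ⋯ × n m` of the periodic extension of `A` contains a repeated
difference vector.  In particular, multidimensional Costas arrays of odd order are not
periodic Costas. -/
theorem odd_order_not_periodic_costas (k l : ℕ) (hk : 0 < k) (hl : 0 < l)
    (n₁ : Fin k → ℕ) (n₂ : Fin l → ℕ)
    (hn₁ : ∀ i, 2 ≤ n₁ i) (hn₂ : ∀ j, 2 ≤ n₂ j)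
    (hodd₁ : ∀ i, Odd (n₁ i)) (hodd₂ : ∀ j, Odd (n₂ j))
    (φ : ((i : Fin k) → Fin (n₁ i)) ≃ ((j : Fin l) → Fin (n₂ j))) :
    (∃ x₁ y₁ x₂ y₂ : (i : Fin k) → Fin (n₁ i),
      x₁ ≠ y₁ ∧ x₂ ≠ y₂ ∧ (x₁, y₁) ≠ (x₂, y₂) ∧
      (∀ i, (((y₁ i : ℤ) - (x₁ i : ℤ)) : ZMod (n₁ i))
          = (((y₂ i : ℤ) - (x₂ i : ℤ)) : ZMod (n₁ i))) ∧
      (∀ j, (((φ y₁ j : ℤ) - (φ x₁ j : ℤ)) : ZMod (n₂ j))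
          = (((φ y₂ j : ℤ) - (φ x₂ j : ℤ)) : ZMod (n₂ j)))) ∧
    (∃ κ α₁ ω₁ α₂ ω₂ : ((i : Fin k) → ℤ) × ((j : Fin l) → ℤ),
      InWindowPerm k l n₁ n₂ κ α₁ ∧ InWindowPerm k l n₁ n₂ κ ω₁ ∧
      InWindowPerm k l n₁ n₂ κ α₂ ∧ InWindowPerm k l n₁ n₂ κ ω₂ ∧
      IsExtDotPerm k l n₁ n₂ φ α₁ ∧ IsExtDotPerm k l n₁ n₂ φ ω₁ ∧
      IsExtDotPerm k l n₁ n₂ φ α₂ ∧ IsExtDotPerm k l n₁ n₂ φ ω₂ ∧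
      α₁ ≠ ω₁ ∧ α₂ ≠ ω₂ ∧ (α₁, ω₁) ≠ (α₂, ω₂) ∧
      ω₁ - α₁ = ω₂ - α₂) :=
  odd_order_not_periodic_costas_general k l hk n₁ n₂ hn₁ hodd₁ hodd₂ φ
end

section
/- Let φ : [n_1] × ⋯ × [n_{m-1}] → [n] with n = n_1⋯n_{m-1} even define a permutation array with index set Λ, E = {i ∈ [m-1] : n_i even}, θ = 1 - ∏_{i∈E}(n_i-1)/n_i. Then |H_Λ| = (n-1)(nθ + 1) - nθ, where H_Λ is the set of admissible toroidal vectors having some component i with h_i = n_i/2 (including possibly h_m = n/2). -/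
/-- Let `φ : [n 1] × ⋯ × [n (m-1)] → [N]` (with `N = ∏ n i` even)
define a permutation array with index set `Λ`, `E = {i : n i even}` and
`θ = 1 - ∏_{i ∈ E}(n i - 1)/(n i)`.  Then the set `H_Λ` of admissible toroidal vectors
(both projections nonzero) having some component `i` with `h_i = n_i / 2` (including
possibly `h_m = N/2`) has cardinality `|H_Λ| = (N-1)(Nθ + 1) - Nθ`. -/
theorem card_HLambda (m' : ℕ) (n : Fin m' → ℕ) (N : ℕ)
    (hn : ∀ i, 2 ≤ n i) (hN : ∏ i, n i = N) (hNeven : Even N)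
    (φ : ((i : Fin m') → Fin (n i)) ≃ Fin N) :
    (({v : ((i : Fin m') → ZMod (n i)) × ZMod N |
        v.1 ≠ 0 ∧ v.2 ≠ 0 ∧
        ((∃ i, Even (n i) ∧ v.1 i = halfElt (n i)) ∨ v.2 = halfElt N)}.ncard : ℚ)
      = ((N : ℚ) - 1) *
          ((N : ℚ) *
            (1 - ∏ i ∈ Finset.univ.filter (fun i => Even (n i)), ((n i : ℚ) - 1) / (n i : ℚ))
            + 1)
        - (N : ℚ) *
            (1 - ∏ i ∈ Finset.univ.filter (fun i => Even (n i)), ((n i : ℚ) - 1) / (n i : ℚ))) := by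
  classical
  haveI : ∀ i, NeZero (n i) := fun i => ⟨by have := hn i; omega⟩
  have hNpos : 0 < N := by
    rw [← hN]; exact Finset.prod_pos (fun i _ => by have := hn i; omega)
  have hN2 : 2 ≤ N := by
    rcases hNeven with ⟨k, hk⟩; omega
  haveI : NeZero N := ⟨by omega⟩
  -- half elements are nonzero
  have halfne : ∀ q : ℕ, 2 ≤ q → [NeZero q] → halfElt q ≠ 0 := by
    intro q hq _ h
    rw [halfElt, ZMod.natCast_eq_zero_iff] at h
    have := Nat.le_of_dvd (by omega) h
    omega
  set P : ((i : Fin m') → ZMod (n i)) → Prop :=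
    fun v => ∃ i, Even (n i) ∧ v i = halfElt (n i) with hP
  set A : Finset ((i : Fin m') → ZMod (n i)) := Finset.univ.filter P with hA
  set K : ℕ := ∏ i, (if Even (n i) then n i - 1 else n i) with hK
  -- card of universe of the Pi type
  have hcardPi : Fintype.card ((i : Fin m') → ZMod (n i)) = N := by
    rw [Fintype.card_pi]
    simp only [ZMod.card]
    exact hN
  -- card of the complement of A
  have hcompl : (Finset.univ.filter (fun v => ¬ P v)) =
      Fintype.piFinset
        (fun i => Finset.univ.filter (fun x : ZMod (n i) => ¬ (Even (n i) ∧ x = halfElt (n i)))) := by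
    ext v
    simp [hP, Fintype.mem_piFinset]
  have hfac : ∀ i, (Finset.univ.filter
      (fun x : ZMod (n i) => ¬ (Even (n i) ∧ x = halfElt (n i)))).card
      = if Even (n i) then n i - 1 else n i := by
    intro i
    by_cases h : Even (n i)
    · simp only [h, true_and, if_pos]
      have : (Finset.univ.filter (fun x : ZMod (n i) => ¬ x = halfElt (n i)))
          = Finset.univ.erase (halfElt (n i)) := Finset.filter_ne' _ _
      rw [this, Finset.card_erase_of_mem (Finset.mem_univ _), Finset.card_univ, ZMod.card]
    · simp [h, Finset.card_univ, ZMod.card]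
  have hKcard : (Finset.univ.filter (fun v => ¬ P v)).card = K := by
    rw [hcompl, Fintype.card_piFinset]
    exact Finset.prod_congr rfl (fun i _ => hfac i)
  have hsplit : A.card + K = N := by
    rw [hA, ← hKcard]
    rw [Finset.card_filter_add_card_filter_not, Finset.card_univ, hcardPi]
  -- P v implies v ≠ 0
  have hPne : ∀ v, P v → v ≠ 0 := by
    intro v ⟨i, hi, hvi⟩ h0
    rw [h0] at hvi
    exact halfne (n i) (hn i) (hvi.symm)
  have hhalfN : halfElt N ≠ 0 := halfne N hN2
  -- the set as a finset
  set U : Finset (((i : Fin m') → ZMod (n i)) × ZMod N) :=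
      A ×ˢ (Finset.univ.erase (0 : ZMod N)) with hU
  set V : Finset (((i : Fin m') → ZMod (n i)) × ZMod N) :=
      (Finset.univ.erase (0 : (i : Fin m') → ZMod (n i))) ×ˢ {halfElt N} with hV
  have hSeq : {v : ((i : Fin m') → ZMod (n i)) × ZMod N |
        v.1 ≠ 0 ∧ v.2 ≠ 0 ∧
        ((∃ i, Even (n i) ∧ v.1 i = halfElt (n i)) ∨ v.2 = halfElt N)}
      = ↑(U ∪ V) := by
    ext ⟨v1, v2⟩
    simp only [Set.mem_setOf_eq, Finset.coe_union, Set.mem_union, Finset.mem_coe,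
      hU, hV, Finset.mem_product, Finset.mem_erase, Finset.mem_univ, and_true,
      Finset.mem_singleton, hA, Finset.mem_filter, true_and]
    constructor
    · rintro ⟨h1, h2, h3 | h3⟩
      · exact Or.inl ⟨h3, h2⟩
      · exact Or.inr ⟨h1, h3⟩
    · rintro (⟨h1, h2⟩ | ⟨h1, h2⟩)
      · exact ⟨hPne v1 h1, h2, Or.inl h1⟩
      · exact ⟨h1, h2 ▸ hhalfN, Or.inr h2⟩
  have hInter : U ∩ V = A ×ˢ ({halfElt N} : Finset (ZMod N)) := by
    ext ⟨v1, v2⟩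
    simp only [hU, hV, Finset.mem_inter, Finset.mem_product, Finset.mem_erase,
      Finset.mem_univ, and_true, Finset.mem_singleton, hA, Finset.mem_filter, true_and]
    constructor
    · rintro ⟨⟨h1, h2⟩, _, h4⟩
      exact ⟨h1, h4⟩
    · rintro ⟨h1, h2⟩
      exact ⟨⟨h1, h2 ▸ hhalfN⟩, hPne v1 h1, h2⟩
  have hcardU : U.card = A.card * (N - 1) := by
    rw [hU, Finset.card_product, Finset.card_erase_of_mem (Finset.mem_univ _),
      Finset.card_univ, ZMod.card]
  have hcardV : V.card = N - 1 := by
    rw [hV, Finset.card_product, Finset.card_erase_of_mem (Finset.mem_univ _),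
      Finset.card_univ, hcardPi, Finset.card_singleton, mul_one]
  have hcardI : (U ∩ V).card = A.card := by
    rw [hInter, Finset.card_product, Finset.card_singleton, mul_one]
  have hmain : (U ∪ V).card + A.card = A.card * (N - 1) + (N - 1) := by
    have := Finset.card_union_add_card_inter U V
    rw [hcardU, hcardV, hcardI] at this
    exact this
  rw [hSeq, Set.ncard_coe_finset]
  -- now rational arithmetic
  set Pr : ℚ := ∏ i ∈ Finset.univ.filter (fun i => Even (n i)), ((n i : ℚ) - 1) / (n i : ℚ)
    with hPr
  have hKQ : (K : ℚ) = (N : ℚ) * Pr := by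
    have hNQ : (N : ℚ) = ∏ i, (n i : ℚ) := by rw [← hN]; push_cast; ring
    rw [hPr, hNQ, Finset.prod_filter, ← Finset.prod_mul_distrib, hK]
    push_cast
    refine Finset.prod_congr rfl (fun i _ => ?_)
    have hni : (n i : ℚ) ≠ 0 := by
      have := hn i; positivity
    by_cases h : Even (n i)
    · simp only [h, if_true]
      rw [Nat.cast_sub (by have := hn i; omega)]
      field_simp
      push_cast; ring
    · simp [h]
  have hAQ : (A.card : ℚ) = (N : ℚ) * (1 - Pr) := by
    have : (A.card : ℚ) + (K : ℚ) = (N : ℚ) := by exact_mod_cast congrArg (Nat.cast (R := ℚ)) hsplit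
    rw [hKQ] at this
    linarith
  have hCQ : ((U ∪ V).card : ℚ) + (A.card : ℚ)
      = (A.card : ℚ) * ((N : ℚ) - 1) + ((N : ℚ) - 1) := by
    have := congrArg (Nat.cast (R := ℚ)) hmain
    push_cast [Nat.cast_sub (by omega : 1 ≤ N)] at this
    convert this using 2
  rw [← hAQ]
  linear_combination hCQ
end

section
/- Let A be an m-dimensional permutation array of even order n defined by a bijection φ : [n_1]×⋯×[n_{m-1}] → [n], let E = {i ∈ [m-1] : n_i even} and θ = 1 - ∏_{i∈E}(n_i-1)/n_i. If θ < (n-2)/(2n), then some n_1 × ⋯ × n_{m-1} × n window of the periodic extension of A has a repeated difference vector; in particular, such a Costas array is not periodic Costas. -/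
/-- `α` is a dot of the periodic extension of the permutation array defined by
`φ : [n 1] × ⋯ × [n (m-1)] → [N]`. -/
def IsExtDot1 (m' : ℕ) (n : Fin m' → ℕ) (N : ℕ)
    (φ : ((i : Fin m') → Fin (n i)) ≃ Fin N)
    (α : ((i : Fin m') → ℤ) × ℤ) : Prop :=
  ∃ x : (i : Fin m') → Fin (n i),
    (∀ i, (α.1 i : ZMod (n i)) = ((x i : ℕ) : ZMod (n i))) ∧
    (α.2 : ZMod N) = ((φ x : ℕ) : ZMod N)

/-- `α` lies in the `n 1 × ⋯ × n (m-1) × N` window based at `κ`. -/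
def InWindow1 (m' : ℕ) (n : Fin m' → ℕ) (N : ℕ)
    (κ α : ((i : Fin m') → ℤ) × ℤ) : Prop :=
  (∀ i, κ.1 i ≤ α.1 i ∧ α.1 i < κ.1 i + (n i : ℤ)) ∧
  (κ.2 ≤ α.2 ∧ α.2 < κ.2 + (N : ℤ))

private lemma emod_eq_of_sub_dvd {n : ℤ} (hn : 0 < n) {x v : ℤ} (h : n ∣ x - v)
    (h0 : 0 ≤ v) (h1 : v < n) : x % n = v := by
  obtain ⟨k, hk⟩ := h
  have hx : x = v + n * k := by linarith
  rw [hx, Int.add_mul_emod_self_left, Int.emod_eq_of_lt h0 h1]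

private lemma coordZ (n : ℤ) (hn : 0 < n) (a b c : ℤ)
    (H : ¬(n ∣ 2*(b-a) ∧ ¬(n ∣ (b-a)) ∧ n ∣ (c - (b-a)))) :
    ∃ κ : ℤ, (b - κ) % n - (a - κ) % n = (b + c - κ) % n - (a + c - κ) % n := by
  set w := (b - a) % n with hw
  set c' := c % n with hc'
  have hw0 : 0 ≤ w := Int.emod_nonneg _ (by omega)
  have hw1 : w < n := Int.emod_lt_of_pos _ hn
  have hc0 : 0 ≤ c' := Int.emod_nonneg _ (by omega)
  have hc1 : c' < n := Int.emod_lt_of_pos _ hn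
  obtain ⟨k1, hk1⟩ : n ∣ (b - a) - w := ⟨(b-a)/n, by rw [hw, Int.emod_def]; ring⟩
  obtain ⟨k2, hk2⟩ : n ∣ c - c' := ⟨c/n, by rw [hc', Int.emod_def]; ring⟩
  rcases lt_or_ge (c' + w) n with hcase | hcase
  · refine ⟨a, ?_⟩
    have e1 : (b - a) % n = w := hw.symm
    have e2 : (a - a) % n = 0 := by simp
    have e3 : (b + c - a) % n = c' + w := emod_eq_of_sub_dvd hn ⟨k1 + k2, by linarith⟩ (by omega) (by omega)
    have e4 : (a + c - a) % n = c' := emod_eq_of_sub_dvd hn ⟨k2, by linarith⟩ (by omega) (by omega)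
    rw [e1, e2, e3, e4]; ring
  · rcases lt_trichotomy w c' with hlt | heq | hgt
    · refine ⟨a - (n - c'), ?_⟩
      have e1 : (b - (a - (n - c'))) % n = n - c' + w := emod_eq_of_sub_dvd hn ⟨k1, by linarith⟩ (by omega) (by omega)
      have e2 : (a - (a - (n - c'))) % n = n - c' := emod_eq_of_sub_dvd hn ⟨0, by ring⟩ (by omega) (by omega)
      have e3 : (b + c - (a - (n - c'))) % n = w := emod_eq_of_sub_dvd hn ⟨k1 + k2 + 1, by linarith⟩ (by omega) (by omega)
      have e4 : (a + c - (a - (n - c'))) % n = 0 := emod_eq_of_sub_dvd hn ⟨k2 + 1, by linarith⟩ (by omega) (by omega)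
      rw [e1, e2, e3, e4]; ring
    · rcases lt_or_eq_of_le (by omega : n ≤ 2*w) with h2w | h2w
      · refine ⟨a - (n - 1), ?_⟩
        have e1 : (b - (a - (n - 1))) % n = w - 1 := emod_eq_of_sub_dvd hn ⟨k1 + 1, by linarith⟩ (by omega) (by omega)
        have e2 : (a - (a - (n - 1))) % n = n - 1 := emod_eq_of_sub_dvd hn ⟨0, by ring⟩ (by omega) (by omega)
        have e3 : (b + c - (a - (n - 1))) % n = 2*w - 1 - n := emod_eq_of_sub_dvd hn ⟨k1 + k2 + 2, by linarith⟩ (by omega) (by omega)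
        have e4 : (a + c - (a - (n - 1))) % n = w - 1 := emod_eq_of_sub_dvd hn ⟨k2 + 1, by linarith⟩ (by omega) (by omega)
        rw [e1, e2, e3, e4]; ring
      · exfalso
        apply H
        refine ⟨⟨2*k1 + 1, by linarith⟩, ?_, ⟨k2 - k1, by linarith⟩⟩
        rintro ⟨k3, hk3⟩
        have hdw : n ∣ w := ⟨k3 - k1, by linarith⟩
        have hle := Int.le_of_dvd (by omega) hdw
        omega
    · refine ⟨a - (n - w), ?_⟩
      have e1 : (b - (a - (n - w))) % n = 0 := emod_eq_of_sub_dvd hn ⟨k1 + 1, by linarith⟩ (by omega) (by omega)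
      have e2 : (a - (a - (n - w))) % n = n - w := emod_eq_of_sub_dvd hn ⟨0, by ring⟩ (by omega) (by omega)
      have e3 : (b + c - (a - (n - w))) % n = c' := emod_eq_of_sub_dvd hn ⟨k1 + k2 + 1, by linarith⟩ (by omega) (by omega)
      have e4 : (a + c - (a - (n - w))) % n = n - w + c' := emod_eq_of_sub_dvd hn ⟨k2, by linarith⟩ (by omega) (by omega)
      rw [e1, e2, e3, e4]; ring

private lemma castIntMod (k : ℕ) (z : ℤ) : (((z % (k:ℤ)) : ℤ) : ZMod k) = (z : ZMod k) := by
  conv_lhs => rw [Int.emod_def]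
  push_cast
  simp

private lemma castValInt (k : ℕ) [NeZero k] (t : ZMod k) : (((t.val : ℕ) : ℤ) : ZMod k) = t := by
  push_cast
  exact ZMod.natCast_rightInverse t

private lemma castWin (k : ℕ) (κ z : ℤ) :
    ((κ + (z - κ) % (k:ℤ) : ℤ) : ZMod k) = ((z : ℤ) : ZMod k) := by
  push_cast [castIntMod]
  ring

/-- Let `A` be an `m`-dimensional permutation array of even order `N`
defined by a bijection `φ : [n 1]×⋯×[n (m-1)] → [N]`, `E = {i : n i even}` and
`θ = 1 - ∏_{i∈E}(n i - 1)/(n i)`.  If `θ < (N-2)/(2N)`, then some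
`n 1 × ⋯ × n (m-1) × N` window of the periodic extension of `A` has a repeated
difference vector; in particular such a Costas array is not periodic Costas. -/
theorem theta_small_implies_repeated_difference (m' : ℕ) (n : Fin m' → ℕ) (N : ℕ)
    (hn : ∀ i, 2 ≤ n i) (hN : ∏ i, n i = N) (hNeven : Even N)
    (φ : ((i : Fin m') → Fin (n i)) ≃ Fin N)
    (hθ : 1 - ∏ i ∈ Finset.univ.filter (fun i => Even (n i)), ((n i : ℚ) - 1) / (n i : ℚ)
          < ((N : ℚ) - 2) / (2 * (N : ℚ))) :
    ∃ κ α₁ ω₁ α₂ ω₂ : ((i : Fin m') → ℤ) × ℤ,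
      InWindow1 m' n N κ α₁ ∧ InWindow1 m' n N κ ω₁ ∧
      InWindow1 m' n N κ α₂ ∧ InWindow1 m' n N κ ω₂ ∧
      IsExtDot1 m' n N φ α₁ ∧ IsExtDot1 m' n N φ ω₁ ∧
      IsExtDot1 m' n N φ α₂ ∧ IsExtDot1 m' n N φ ω₂ ∧
      α₁ ≠ ω₁ ∧ α₂ ≠ ω₂ ∧ (α₁, ω₁) ≠ (α₂, ω₂) ∧
      ω₁ - α₁ = ω₂ - α₂ := by
  classical
  haveI hNZ : ∀ i, NeZero (n i) := fun i => ⟨by have := hn i; omega⟩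
  have hNpos : 0 < N := by
    rw [← hN]; exact Finset.prod_pos fun i _ => by have := hn i; omega
  haveI : NeZero N := ⟨hNpos.ne'⟩
  -- choose a good shift s
  have hs_ex : ∃ s : (i : Fin m') → ZMod (n i), s ≠ 0 ∧ ∀ i, 2 * s i = 0 → s i = 0 := by
    by_cases hcrit : ∃ j, n j ≠ 2
    · obtain ⟨j, hj⟩ := hcrit
      have hj3 : 3 ≤ n j := by have := hn j; omega
      refine ⟨Pi.single j 1, ?_, ?_⟩
      · intro h0
        have h1 : (Pi.single j 1 : ∀ i, ZMod (n i)) j = 0 := by rw [h0]; rfl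
        rw [Pi.single_eq_same] at h1
        haveI : Fact (1 < n j) := ⟨by omega⟩
        exact one_ne_zero h1
      · intro i hi
        rcases eq_or_ne i j with rfl | hne
        · rw [Pi.single_eq_same] at hi ⊢
          exfalso
          rw [mul_one] at hi
          have h2 : ((2:ℕ) : ZMod (n i)) = 0 := by exact_mod_cast hi
          rw [ZMod.natCast_eq_zero_iff] at h2
          have := Nat.le_of_dvd (by norm_num) h2
          omega
        · rw [Pi.single_eq_of_ne hne]
    · push_neg at hcrit
      exfalso
      rcases Nat.eq_zero_or_pos m' with hm | hm
      · have hN1 : N = 1 := by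
          rw [← hN]; subst hm; simp
        obtain ⟨r, hr⟩ := hNeven
        omega
      · have hNval : N = 2 ^ m' := by rw [← hN]; simp [hcrit]
        have hfilter : Finset.univ.filter (fun i => Even (n i)) = (Finset.univ : Finset (Fin m')) := by
          apply Finset.filter_true_of_mem
          intro i _
          rw [hcrit i]
          exact even_two
        rw [hfilter] at hθ
        have hprod : ∏ i : Fin m', ((n i : ℚ) - 1) / (n i : ℚ) = (1/2 : ℚ)^m' := by
          have hc : ∀ i ∈ (Finset.univ : Finset (Fin m')), ((n i : ℚ) - 1) / (n i : ℚ) = (1/2:ℚ) :=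
            fun i _ => by rw [hcrit i]; norm_num
          rw [Finset.prod_congr rfl hc, Finset.prod_const]
          simp
        rw [hprod] at hθ
        set Q : ℚ := (2:ℚ)^m' with hQ
        have hQpos : (0:ℚ) < Q := by positivity
        have hQ2 : (2:ℚ) ≤ Q := by
          calc (2:ℚ) = 2^1 := by norm_num
          _ ≤ 2^m' := by exact pow_le_pow_right₀ (by norm_num) hm
        have hNQ : (N:ℚ) = Q := by rw [hNval]; push_cast; rfl
        rw [hNQ] at hθ
        have h12 : (1/2:ℚ)^m' = 1/Q := by rw [div_pow]; norm_num [hQ]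
        rw [h12, lt_div_iff₀ (by positivity)] at hθ
        have hinv : (1/Q) * Q = 1 := by field_simp
        nlinarith [hθ, hinv, hQpos, hQ2]
  obtain ⟨s, hs0, hsgood⟩ := hs_ex
  -- the permutation on residues
  set Xf : ((i : Fin m') → ZMod (n i)) → ((i : Fin m') → Fin (n i)) :=
    fun g i => ⟨(g i).val, ZMod.val_lt _⟩ with hXfdef
  set ψ : ((i : Fin m') → ZMod (n i)) → ZMod N := fun g => ((φ (Xf g) : ℕ) : ZMod N) with hψdef
  have hXf : Function.Injective Xf := by
    intro g h hg
    funext i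
    have h1 : (Xf g i : ℕ) = (Xf h i : ℕ) := by rw [hg]
    exact ZMod.val_injective _ h1
  have hψ : Function.Injective ψ := by
    intro g h hgh
    apply hXf
    apply φ.injective
    apply Fin.ext
    have := congrArg ZMod.val hgh
    rwa [ZMod.val_cast_of_lt (φ (Xf g)).isLt, ZMod.val_cast_of_lt (φ (Xf h)).isLt] at this
  -- collision of the difference map
  have hcard : Fintype.card ((i : Fin m') → ZMod (n i)) = Fintype.card (ZMod N) := by
    rw [Fintype.card_pi, ZMod.card]
    rw [← hN]
    exact Finset.prod_congr rfl fun i _ => ZMod.card (n i)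
  have hcol : ∃ x y, x ≠ y ∧ ψ (x + s) - ψ x = ψ (y + s) - ψ y := by
    by_contra hcon
    push_neg at hcon
    set gs : ((i : Fin m') → ZMod (n i)) → ZMod N := fun v => ψ (v + s) - ψ v with hgsdef
    have hinj : Function.Injective gs := by
      intro x y h
      by_contra hne
      exact hcon x y hne h
    have hbij : Function.Bijective gs :=
      (Fintype.bijective_iff_injective_and_card gs).2 ⟨hinj, hcard⟩
    have hsum0 : ∑ v, gs v = 0 := by
      have h1 : ∑ v, ψ (v + s) = ∑ v, ψ v :=
        Fintype.sum_bijective (· + s) (Equiv.addRight s).bijective _ _ (fun v => rfl)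
      calc ∑ v, gs v = ∑ v, (ψ (v + s) - ψ v) := rfl
        _ = ∑ v, ψ (v + s) - ∑ v, ψ v := Finset.sum_sub_distrib _ _
        _ = 0 := by rw [h1, sub_self]
    have hsum1 : ∑ v, gs v = ∑ z : ZMod N, z :=
      Fintype.sum_bijective gs hbij _ _ (fun v => rfl)
    have hbij2 : Function.Bijective (fun i : Fin N => ((i : ℕ) : ZMod N)) := by
      rw [Fintype.bijective_iff_injective_and_card]
      refine ⟨fun i j hij => ?_, by simp [ZMod.card]⟩
      have := congrArg ZMod.val hij
      rw [ZMod.val_cast_of_lt i.isLt, ZMod.val_cast_of_lt j.isLt] at this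
      exact Fin.ext this
    have hzsum : (∑ z : ZMod N, z) = ((∑ i ∈ Finset.range N, i : ℕ) : ZMod N) := by
      rw [Nat.cast_sum]
      rw [← Fin.sum_univ_eq_sum_range (fun i => ((i : ℕ) : ZMod N)) N]
      exact (Fintype.sum_bijective _ hbij2 _ _ (fun i => rfl)).symm
    rw [hsum0] at hsum1
    rw [hzsum] at hsum1
    rw [eq_comm, ZMod.natCast_eq_zero_iff] at hsum1
    obtain ⟨k, hk⟩ := hsum1
    have h2 : (∑ i ∈ Finset.range N, i) * 2 = N * (N - 1) := Finset.sum_range_id_mul_two N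
    rw [hk] at h2
    have h3 : N * (k * 2) = N * (N - 1) := by rw [← h2]; ring
    have h4 : k * 2 = N - 1 := Nat.eq_of_mul_eq_mul_left hNpos h3
    obtain ⟨r, hr⟩ := hNeven
    omega
  obtain ⟨x, y, hxy, hgxy⟩ := hcol
  set u : ZMod N := ψ (x + s) - ψ x with hu
  -- integer representatives
  set A : ℤ := ((ψ x).val : ℤ) with hA
  set B : ℤ := ((ψ y).val : ℤ) with hB
  set C : ℤ := ((u).val : ℤ) with hC
  have hcastA : ((A : ℤ) : ZMod N) = ψ x := castValInt N _
  have hcastB : ((B : ℤ) : ZMod N) = ψ y := castValInt N _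
  have hcastC : ((C : ℤ) : ZMod N) = u := castValInt N _
  -- temporal goodness
  have htemp : ¬((N:ℤ) ∣ 2*(B - A) ∧ ¬((N:ℤ) ∣ (B - A)) ∧ (N:ℤ) ∣ (C - (B - A))) := by
    rintro ⟨h1, h2, h3⟩
    rw [← ZMod.intCast_zmod_eq_zero_iff_dvd] at h1 h3
    have f1 : 2 * (ψ y - ψ x) = 0 := by
      have e : ((2*(B - A) : ℤ) : ZMod N) = 2 * (ψ y - ψ x) := by
        push_cast [hcastA, hcastB]
        ring
      rw [e] at h1; exact h1
    have f3 : u = ψ y - ψ x := by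
      have e : ((C - (B - A) : ℤ) : ZMod N) = u - (ψ y - ψ x) := by
        push_cast [hcastA, hcastB, hcastC]
        ring
      rw [e] at h3
      linear_combination h3
    have hxs : ψ (x + s) = ψ y := by linear_combination -hu + f3
    have hys : ψ (y + s) = ψ x := by linear_combination -hgxy - hu + f3 + f1
    have h4 : x + s = y := hψ hxs
    have h5 : y + s = x := hψ hys
    have h6 : s + s = 0 := by
      have h7 : x + (s + s) = x + 0 := by rw [add_zero, ← add_assoc, h4, h5]
      exact add_left_cancel h7
    apply hs0
    funext i
    have h8 : s i + s i = 0 := congrFun h6 i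
    exact hsgood i (by rw [two_mul]; exact h8)
  -- spatial goodness and window choice per coordinate
  have hspace : ∀ i, ∃ κ : ℤ,
      (((y i).val:ℤ) - κ) % (n i : ℤ) - (((x i).val:ℤ) - κ) % (n i : ℤ) =
      (((y i).val:ℤ) + ((s i).val:ℤ) - κ) % (n i : ℤ) - (((x i).val:ℤ) + ((s i).val:ℤ) - κ) % (n i : ℤ) := by
    intro i
    apply coordZ ((n i : ℤ)) (by exact_mod_cast (hn i).trans_lt' (by norm_num) : (0:ℤ) < (n i:ℤ))
    rintro ⟨h1, h2, h3⟩
    apply h2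
    rw [← ZMod.intCast_zmod_eq_zero_iff_dvd] at h1 h3 ⊢
    have e1 : ((2*(((y i).val:ℤ) - ((x i).val:ℤ)) : ℤ) : ZMod (n i)) = 2 * (y i - x i) := by
      push_cast [ZMod.natCast_val, ZMod.cast_id]
      ring
    have e3 : ((((s i).val:ℤ) - (((y i).val:ℤ) - ((x i).val:ℤ)) : ℤ) : ZMod (n i)) = s i - (y i - x i) := by
      push_cast [ZMod.natCast_val, ZMod.cast_id]
      ring
    rw [e1] at h1
    rw [e3] at h3
    have e2 : s i = y i - x i := by linear_combination h3
    have e4 : s i = 0 := hsgood i (by rw [e2]; linear_combination h1)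
    have e5 : (((((y i).val:ℤ) - ((x i).val:ℤ)) : ℤ) : ZMod (n i)) = y i - x i := by
      push_cast [ZMod.natCast_val, ZMod.cast_id]
      try ring
    rw [e5]
    rw [e4] at e2
    linear_combination -e2
  choose K hK using hspace
  obtain ⟨κt, hκt⟩ := coordZ (N:ℤ) (by exact_mod_cast hNpos) A B C htemp
  -- window membership helper
  have hwin : ∀ (k:ℕ), 0 < k → ∀ κ z : ℤ,
      κ ≤ κ + (z - κ) % (k:ℤ) ∧ κ + (z - κ) % (k:ℤ) < κ + (k:ℤ) := by
    intro k hk κ z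
    have h1 := Int.emod_nonneg (z - κ) (by exact_mod_cast hk.ne' : ((k:ℤ)) ≠ 0)
    have h2 := Int.emod_lt_of_pos (z - κ) (by exact_mod_cast hk : (0:ℤ) < (k:ℤ))
    omega
  refine ⟨(K, κt),
    (fun i => K i + (((x i).val:ℤ) - K i) % (n i : ℤ), κt + (A - κt) % (N:ℤ)),
    (fun i => K i + (((y i).val:ℤ) - K i) % (n i : ℤ), κt + (B - κt) % (N:ℤ)),
    (fun i => K i + (((x i).val:ℤ) + ((s i).val:ℤ) - K i) % (n i : ℤ), κt + (A + C - κt) % (N:ℤ)),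
    (fun i => K i + (((y i).val:ℤ) + ((s i).val:ℤ) - K i) % (n i : ℤ), κt + (B + C - κt) % (N:ℤ)),
    ⟨fun i => hwin (n i) (by have := hn i; omega) _ _, hwin N hNpos _ _⟩,
    ⟨fun i => hwin (n i) (by have := hn i; omega) _ _, hwin N hNpos _ _⟩,
    ⟨fun i => hwin (n i) (by have := hn i; omega) _ _, hwin N hNpos _ _⟩,
    ⟨fun i => hwin (n i) (by have := hn i; omega) _ _, hwin N hNpos _ _⟩,
    ?_, ?_, ?_, ?_, ?_, ?_, ?_, ?_⟩
  · -- IsExtDot α₁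
    refine ⟨Xf x, fun i => ?_, ?_⟩
    · rw [castWin (n i) (K i) (((x i).val:ℤ))]
      try rw [castValInt]
      try exact (ZMod.natCast_rightInverse (x i)).symm
    · rw [castWin N κt A, hcastA]
      try rfl
  · -- IsExtDot ω₁
    refine ⟨Xf y, fun i => ?_, ?_⟩
    · rw [castWin (n i) (K i) (((y i).val:ℤ))]
      try rw [castValInt]
      try exact (ZMod.natCast_rightInverse (y i)).symm
    · rw [castWin N κt B, hcastB]
      try rfl
  · -- IsExtDot α₂
    refine ⟨Xf (x + s), fun i => ?_, ?_⟩
    · rw [castWin (n i) (K i) _]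
      have e : ((((x i).val:ℤ) + ((s i).val:ℤ) : ℤ) : ZMod (n i)) = x i + s i := by
        push_cast [ZMod.natCast_val, ZMod.cast_id]
        try ring
      rw [e]
      try exact (ZMod.natCast_rightInverse ((x + s) i)).symm
    · rw [castWin N κt (A + C)]
      have e : ((A + C : ℤ) : ZMod N) = ψ (x + s) := by
        push_cast [hcastA, hcastC]
        linear_combination hu
      rw [e]
      try rfl
  · -- IsExtDot ω₂
    refine ⟨Xf (y + s), fun i => ?_, ?_⟩
    · rw [castWin (n i) (K i) _]
      have e : ((((y i).val:ℤ) + ((s i).val:ℤ) : ℤ) : ZMod (n i)) = y i + s i := by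
        push_cast [ZMod.natCast_val, ZMod.cast_id]
        try ring
      rw [e]
      try exact (ZMod.natCast_rightInverse ((y + s) i)).symm
    · rw [castWin N κt (B + C)]
      have e : ((B + C : ℤ) : ZMod N) = ψ (y + s) := by
        push_cast [hcastB, hcastC]
        linear_combination hu + hgxy
      rw [e]
      try rfl
  · -- α₁ ≠ ω₁
    intro h
    have h2 : κt + (A - κt) % (N:ℤ) = κt + (B - κt) % (N:ℤ) := congrArg Prod.snd h
    have h3 : (A - κt) % (N:ℤ) = (B - κt) % (N:ℤ) := by omega
    have h4 : (N:ℤ) ∣ (B - κt) - (A - κt) := Int.ModEq.dvd h3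
    have h5 : (N:ℤ) ∣ B - A := by
      have e : (B - κt) - (A - κt) = B - A := by ring
      rwa [e] at h4
    rw [← ZMod.intCast_zmod_eq_zero_iff_dvd] at h5
    have h6 : ψ y - ψ x = 0 := by
      have e : ((B - A : ℤ) : ZMod N) = ψ y - ψ x := by
        push_cast [hcastA, hcastB]
        try ring
      rw [e] at h5; exact h5
    exact hxy (hψ (sub_eq_zero.mp h6)).symm
  · -- α₂ ≠ ω₂
    intro h
    have h2 : κt + (A + C - κt) % (N:ℤ) = κt + (B + C - κt) % (N:ℤ) := congrArg Prod.snd h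
    have h3 : (A + C - κt) % (N:ℤ) = (B + C - κt) % (N:ℤ) := by omega
    have h4 : (N:ℤ) ∣ (B + C - κt) - (A + C - κt) := Int.ModEq.dvd h3
    have h5 : (N:ℤ) ∣ B - A := by
      have e : (B + C - κt) - (A + C - κt) = B - A := by ring
      rwa [e] at h4
    rw [← ZMod.intCast_zmod_eq_zero_iff_dvd] at h5
    have h6 : ψ y - ψ x = 0 := by
      have e : ((B - A : ℤ) : ZMod N) = ψ y - ψ x := by
        push_cast [hcastA, hcastB]
        try ring
      rw [e] at h5; exact h5
    exact hxy (hψ (sub_eq_zero.mp h6)).symm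
  · -- pairs distinct
    intro h
    obtain ⟨j, hj⟩ : ∃ j, s j ≠ 0 := by
      by_contra hc
      push_neg at hc
      exact hs0 (funext fun i => hc i)
    have h1 := congrArg Prod.fst h
    have h2 : K j + (((x j).val:ℤ) - K j) % (n j : ℤ)
        = K j + (((x j).val:ℤ) + ((s j).val:ℤ) - K j) % (n j : ℤ) :=
      congrFun (congrArg Prod.fst h1) j
    have h3 : (((x j).val:ℤ) - K j) % (n j : ℤ) = (((x j).val:ℤ) + ((s j).val:ℤ) - K j) % (n j : ℤ) := by
      omega
    have h4 := Int.ModEq.dvd h3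
    have h5 : ((n j : ℕ):ℤ) ∣ ((s j).val:ℤ) := by
      have e : (((x j).val:ℤ) + ((s j).val:ℤ) - K j) - ((((x j).val:ℤ)) - K j) = ((s j).val:ℤ) := by ring
      rwa [e] at h4
    rw [← ZMod.intCast_zmod_eq_zero_iff_dvd] at h5
    rw [castValInt] at h5
    exact hj h5
  · -- equal differences
    refine Prod.ext_iff.2 ⟨?_, ?_⟩
    · funext i
      have := hK i
      simp only [Prod.fst_sub, Pi.sub_apply]
      omega
    · have := hκt
      simp only [Prod.snd_sub]
      omega
end

section
/- Let A be a three-dimensional permutation array of size 2 × k × 2k with k odd, defined by a bijection φ : [2]×[k] → [2k]. Then for every (x_0, y_0) ∈ (ℤ_2 × ℤ_k) \ {(0,0)}, there exists z_0 ∈ ℤ_{2k} \ {0} such that the toroidal vector (x_0, y_0, z_0) occurs at least twice in A. -/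
/-!
Translation by `(x₀, y₀) ≠ (0, 0)` on the torus `ℤ₂ × ℤ_k` moves every dot, so, `φ` being
injective, each of the `2k` dots `p` gives a nonzero jump `φ (τ p) - φ p` in `ℤ_{2k}`.
There are only `2k - 1` nonzero values, so two dots give the same jump.
-/

open Function

theorem Fin.exists_intCast_sub_eq {n : ℕ} [NeZero n] (a : Fin n) (x : ZMod n) :
    ∃ b : Fin n, (((b : ℤ) - (a : ℤ)) : ZMod n) = x :=
  ⟨⟨((a : ZMod n) + x).val, ZMod.val_lt _⟩, by push_cast [ZMod.natCast_val, ZMod.cast_id]; ring⟩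

theorem ZMod.natCast_finVal_injective (n : ℕ) :
    Injective fun a : Fin n => ((a : ℕ) : ZMod n) := by
  intro a b hab
  ext
  simpa only [ZMod.val_cast_of_lt a.isLt, ZMod.val_cast_of_lt b.isLt] using congrArg ZMod.val hab

theorem exists_ne_sub_eq_of_card_le {α H : Type*} [Fintype α] [AddGroup H] [Fintype H]
    [DecidableEq H] {ψ : α → H} (hψ : Injective ψ) {τ : α → α} (hτ : ∀ a, τ a ≠ a)
    (hcard : Fintype.card H ≤ Fintype.card α) :
    ∃ a b, a ≠ b ∧ ψ (τ a) - ψ a ≠ 0 ∧ ψ (τ a) - ψ a = ψ (τ b) - ψ b := by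
  have hjump : ∀ a ∈ Finset.univ, ψ (τ a) - ψ a ∈ Finset.univ.erase 0 := fun a _ =>
    Finset.mem_erase.mpr ⟨sub_ne_zero.mpr (hψ.ne (hτ a)), Finset.mem_univ _⟩
  have hlt : (Finset.univ.erase (0 : H)).card < (Finset.univ : Finset α).card := by
    rw [Finset.card_erase_of_mem (Finset.mem_univ _)]
    exact lt_of_lt_of_le (Nat.sub_one_lt Fintype.card_ne_zero) hcard
  obtain ⟨a, -, b, -, hab, heq⟩ := Finset.exists_ne_map_eq_of_card_lt_of_maps_to hlt hjump
  exact ⟨a, b, hab, (Finset.mem_erase.mp (hjump a (Finset.mem_univ a))).1, heq⟩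

theorem repeated_toroidal_each_pair_general (k : ℕ) (hk2 : 2 ≤ k)
    (φ : Fin 2 × Fin k ≃ Fin (2 * k))
    (x₀ : ZMod 2) (y₀ : ZMod k) (hxy : (x₀, y₀) ≠ (0, 0)) :
    ∃ z₀ : ZMod (2 * k), z₀ ≠ 0 ∧
      ∃ p₁ q₁ p₂ q₂ : Fin 2 × Fin k,
        p₁ ≠ q₁ ∧ p₂ ≠ q₂ ∧ (p₁, q₁) ≠ (p₂, q₂) ∧
        (((q₁.1 : ℤ) - (p₁.1 : ℤ)) : ZMod 2) = x₀ ∧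
        (((q₁.2 : ℤ) - (p₁.2 : ℤ)) : ZMod k) = y₀ ∧
        (((φ q₁ : ℤ) - (φ p₁ : ℤ)) : ZMod (2 * k)) = z₀ ∧
        (((q₂.1 : ℤ) - (p₂.1 : ℤ)) : ZMod 2) = x₀ ∧
        (((q₂.2 : ℤ) - (p₂.2 : ℤ)) : ZMod k) = y₀ ∧
        (((φ q₂ : ℤ) - (φ p₂ : ℤ)) : ZMod (2 * k)) = z₀ := by
  have : NeZero k := ⟨by omega⟩
  have hshift : ∀ p : Fin 2 × Fin k, ∃ q : Fin 2 × Fin k,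
      (((q.1 : ℤ) - (p.1 : ℤ)) : ZMod 2) = x₀ ∧ (((q.2 : ℤ) - (p.2 : ℤ)) : ZMod k) = y₀ := by
    intro p
    obtain ⟨a, ha⟩ := p.1.exists_intCast_sub_eq x₀
    obtain ⟨b, hb⟩ := p.2.exists_intCast_sub_eq y₀
    exact ⟨(a, b), ha, hb⟩
  choose τ hτx hτy using hshift
  have hτ : ∀ p, τ p ≠ p := fun p h => hxy <| by
    rw [← hτx p, ← hτy p, h, sub_self, sub_self]
  have hcard : Fintype.card (ZMod (2 * k)) ≤ Fintype.card (Fin 2 × Fin k) := by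
    simp only [ZMod.card, Fintype.card_prod, Fintype.card_fin, le_refl]
  obtain ⟨p₁, p₂, hne, hz, heq⟩ :=
    exists_ne_sub_eq_of_card_le ((ZMod.natCast_finVal_injective _).comp φ.injective) hτ hcard
  refine ⟨_, hz, p₁, τ p₁, p₂, τ p₂, (hτ p₁).symm, (hτ p₂).symm,
    fun h => hne (congrArg Prod.fst h), hτx p₁, hτy p₁, ?_, hτx p₂, hτy p₂, ?_⟩
  · push_cast; rfl
  · push_cast; exact heq.symm

/-- Let `A` be a three-dimensional permutation array of size
`2 × k × 2k` with `k` odd, defined by a bijection `φ : [2] × [k] → [2k]`.  Then for every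
`(x₀, y₀) ∈ (ℤ₂ × ℤ_k) \ {(0,0)}` there exists `z₀ ∈ ℤ_{2k} \ {0}` such that the
toroidal vector `(x₀, y₀, z₀)` occurs at least twice in `A`. -/
theorem repeated_toroidal_each_pair (k : ℕ) (hk : Odd k) (hk2 : 2 ≤ k)
    (φ : Fin 2 × Fin k ≃ Fin (2 * k))
    (x₀ : ZMod 2) (y₀ : ZMod k) (hxy : (x₀, y₀) ≠ (0, 0)) :
    ∃ z₀ : ZMod (2 * k), z₀ ≠ 0 ∧
      ∃ p₁ q₁ p₂ q₂ : Fin 2 × Fin k,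
        p₁ ≠ q₁ ∧ p₂ ≠ q₂ ∧ (p₁, q₁) ≠ (p₂, q₂) ∧
        (((q₁.1 : ℤ) - (p₁.1 : ℤ)) : ZMod 2) = x₀ ∧
        (((q₁.2 : ℤ) - (p₁.2 : ℤ)) : ZMod k) = y₀ ∧
        (((φ q₁ : ℤ) - (φ p₁ : ℤ)) : ZMod (2 * k)) = z₀ ∧
        (((q₂.1 : ℤ) - (p₂.1 : ℤ)) : ZMod 2) = x₀ ∧
        (((q₂.2 : ℤ) - (p₂.2 : ℤ)) : ZMod k) = y₀ ∧
        (((φ q₂ : ℤ) - (φ p₂ : ℤ)) : ZMod (2 * k)) = z₀ :=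
  repeated_toroidal_each_pair_general k hk2 φ x₀ y₀ hxy
end

section
/- Let A be a three-dimensional permutation array of size 2 × k × 2k with k odd, defined by a bijection φ : [2]×[k] → [2k], and suppose A has dots α_1, ω_1, α_2, ω_2 with ω_1 - α_1 and ω_2 - α_2 both equal as toroidal vectors to (0, y, k) for some y ∈ ℤ_k \ {0}, with third coordinates satisfying ω_1[3] - α_1[3] = k, ω_2[3] - α_2[3] = -k, and α_1[3] = ω_2[3]. Then α_1 = ω_2 and ω_1 = α_2, and consequently y = 0, a contradiction. Hence no such configuration exists. -/
/-!
Since `φ` is injective, `α₁[3] = ω₂[3]` forces `ω₂ = α₁`, and then the two difference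
relations force `α₂ = ω₁`. Reading the second coordinate of both toroidal vectors gives
`y = ω₁[2] - α₁[2]` and `y = α₁[2] - ω₁[2]` in `ℤ_k`, so `2y = 0`; as `2` is a unit
modulo the odd number `k`, `y = 0`.
-/

lemma ZMod.isUnit_two_of_odd {n : ℕ} (hn : Odd n) : IsUnit (2 : ZMod n) := by
  exact_mod_cast (ZMod.isUnit_iff_coprime 2 n).mpr (Nat.coprime_two_left.mpr hn)

lemma ZMod.eq_zero_of_add_self_eq_zero {n : ℕ} (hn : Odd n) {y : ZMod n} (h : y + y = 0) :
    y = 0 :=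
  (isUnit_two_of_odd hn).mul_right_eq_zero.mp (by rwa [two_mul])

lemma Equiv.eq_of_intCast_apply_eq {α : Type*} {n : ℕ} (e : α ≃ Fin n) {a b : α}
    (h : (e a : ℤ) = (e b : ℤ)) : a = b :=
  e.injective (Fin.ext (by exact_mod_cast h))

theorem no_half_configuration_general (k : ℕ) (hk : Odd k)
    (φ : Fin 2 × Fin k ≃ Fin (2 * k))
    (y : ZMod k) (hy : y ≠ 0)
    (p₁ q₁ p₂ q₂ : Fin 2 × Fin k)
    (t₁₂ : (((q₁.2 : ℤ) - (p₁.2 : ℤ)) : ZMod k) = y)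
    (t₂₂ : (((q₂.2 : ℤ) - (p₂.2 : ℤ)) : ZMod k) = y)
    (d₁ : (φ q₁ : ℤ) - (φ p₁ : ℤ) = (k : ℤ))
    (d₂ : (φ q₂ : ℤ) - (φ p₂ : ℤ) = -(k : ℤ))
    (d₃ : (φ p₁ : ℤ) = (φ q₂ : ℤ)) :
    False := by
  have hq₂ : q₂ = p₁ := φ.eq_of_intCast_apply_eq d₃.symm
  have hp₂ : p₂ = q₁ := φ.eq_of_intCast_apply_eq (by omega)
  rw [hq₂, hp₂] at t₂₂
  refine hy (ZMod.eq_zero_of_add_self_eq_zero hk ?_)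
  calc y + y
      = (((q₁.2 : ℤ) - (p₁.2 : ℤ)) : ZMod k) + (((p₁.2 : ℤ) - (q₁.2 : ℤ)) : ZMod k) := by
        rw [t₁₂, t₂₂]
    _ = 0 := by push_cast; ring

/-- Let `A` be a three-dimensional permutation array of size
`2 × k × 2k` with `k` odd, defined by a bijection `φ : [2] × [k] → [2k]`.  Suppose `A`
has dots `α₁ = (p₁, φ p₁)`, `ω₁ = (q₁, φ q₁)`, `α₂ = (p₂, φ p₂)`, `ω₂ = (q₂, φ q₂)` with
`ω₁ - α₁` and `ω₂ - α₂` both equal as toroidal vectors to `(0, y, k)` for some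
`y ∈ ℤ_k \ {0}`, whose third coordinates satisfy `ω₁[3] - α₁[3] = k`,
`ω₂[3] - α₂[3] = -k` and `α₁[3] = ω₂[3]`.  Then no such configuration exists. -/
theorem no_half_configuration (k : ℕ) (hk : Odd k) (hk2 : 2 ≤ k)
    (φ : Fin 2 × Fin k ≃ Fin (2 * k))
    (y : ZMod k) (hy : y ≠ 0)
    (p₁ q₁ p₂ q₂ : Fin 2 × Fin k)
    (h₁ : p₁ ≠ q₁) (h₂ : p₂ ≠ q₂)
    (t₁₁ : (((q₁.1 : ℤ) - (p₁.1 : ℤ)) : ZMod 2) = 0)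
    (t₁₂ : (((q₁.2 : ℤ) - (p₁.2 : ℤ)) : ZMod k) = y)
    (t₁₃ : (((φ q₁ : ℤ) - (φ p₁ : ℤ)) : ZMod (2 * k)) = ((k : ℤ) : ZMod (2 * k)))
    (t₂₁ : (((q₂.1 : ℤ) - (p₂.1 : ℤ)) : ZMod 2) = 0)
    (t₂₂ : (((q₂.2 : ℤ) - (p₂.2 : ℤ)) : ZMod k) = y)
    (t₂₃ : (((φ q₂ : ℤ) - (φ p₂ : ℤ)) : ZMod (2 * k)) = ((k : ℤ) : ZMod (2 * k)))
    (d₁ : (φ q₁ : ℤ) - (φ p₁ : ℤ) = (k : ℤ))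
    (d₂ : (φ q₂ : ℤ) - (φ p₂ : ℤ) = -(k : ℤ))
    (d₃ : (φ p₁ : ℤ) = (φ q₂ : ℤ)) :
    False :=
  no_half_configuration_general k hk φ y hy p₁ q₁ p₂ q₂ t₁₂ t₂₂ d₁ d₂ d₃
end

section
/- There exists a three-dimensional periodic Costas array of size 2 × 2 × 4: namely the array with dots {(1,1,1), (1,2,2), (2,2,3), (2,1,4)}, i.e., defined by the bijection φ(1,1)=1, φ(1,2)=2, φ(2,2)=3, φ(2,1)=4. Every 2 × 2 × 4 window of its periodic extension has no repeated difference vector. -/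
/-- The dots of the `2 × 2 × 4` Costas array from the paper's Example 1
(0-indexed version of `{(1,1,1), (1,2,2), (2,2,3), (2,1,4)}`). -/
def exampleDots : Finset (ℤ × ℤ × ℤ) :=
  {(0, 0, 0), (0, 1, 1), (1, 1, 2), (1, 0, 3)}

/-- `α ∈ ℤ³` is a dot of the periodic extension (moduli `2, 2, 4`) of the example array. -/
def IsExampleExtDot (α : ℤ × ℤ × ℤ) : Prop :=
  ∃ d ∈ exampleDots,
    (α.1 : ZMod 2) = (d.1 : ZMod 2) ∧
    (α.2.1 : ZMod 2) = (d.2.1 : ZMod 2) ∧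
    (α.2.2 : ZMod 4) = (d.2.2 : ZMod 4)

/-- `α` lies in the `2 × 2 × 4` window based at `κ`. -/
def InWindow224 (κ α : ℤ × ℤ × ℤ) : Prop :=
  κ.1 ≤ α.1 ∧ α.1 < κ.1 + 2 ∧
  κ.2.1 ≤ α.2.1 ∧ α.2.1 < κ.2.1 + 2 ∧
  κ.2.2 ≤ α.2.2 ∧ α.2.2 < κ.2.2 + 4

private lemma extDot_mod (α : ℤ × ℤ × ℤ) (h : IsExampleExtDot α) :
    (α.1 % 2 = 0 ∧ α.2.1 % 2 = 0 ∧ α.2.2 % 4 = 0) ∨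
    (α.1 % 2 = 0 ∧ α.2.1 % 2 = 1 ∧ α.2.2 % 4 = 1) ∨
    (α.1 % 2 = 1 ∧ α.2.1 % 2 = 1 ∧ α.2.2 % 4 = 2) ∨
    (α.1 % 2 = 1 ∧ α.2.1 % 2 = 0 ∧ α.2.2 % 4 = 3) := by
  obtain ⟨d, hd, h1, h2, h3⟩ := h
  rw [ZMod.intCast_eq_intCast_iff] at h1 h2 h3
  simp only [exampleDots, Finset.mem_insert, Finset.mem_singleton] at hd
  rcases hd with rfl | rfl | rfl | rfl <;>
    simp only [Int.ModEq] at h1 h2 h3 <;> norm_num at h1 h2 h3 <;> omega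

private def e1 : Fin 4 → ℕ := ![0, 0, 1, 1]
private def e2 : Fin 4 → ℕ := ![0, 1, 1, 0]

private def o1 (m : Fin 2) (r : Fin 4) : ℕ := (e1 r + 2 - m.val) % 2
private def o2 (m : Fin 2) (r : Fin 4) : ℕ := (e2 r + 2 - m.val) % 2
private def o3 (m : Fin 4) (r : Fin 4) : ℕ := (r.val + 4 - m.val) % 4

private lemma core : ∀ (m1 m2 : Fin 2) (m3 : Fin 4) (ra rb rc rd : Fin 4),
    ra ≠ rb → rc ≠ rd →
    o1 m1 rb + o1 m1 rc = o1 m1 rd + o1 m1 ra →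
    o2 m2 rb + o2 m2 rc = o2 m2 rd + o2 m2 ra →
    o3 m3 rb + o3 m3 rc = o3 m3 rd + o3 m3 ra →
    ra = rc ∧ rb = rd := by decide

private lemma bridge {k1 k2 k3 x1 x2 x3 : ℤ} (m1 m2 : Fin 2) (m3 : Fin 4)
    (hk1 : k1 % 2 = (m1.val : ℤ)) (hk2 : k2 % 2 = (m2.val : ℤ)) (hk3 : k3 % 4 = (m3.val : ℤ))
    (w1 : k1 ≤ x1) (w2 : x1 < k1 + 2) (w3 : k2 ≤ x2) (w4 : x2 < k2 + 2)
    (w5 : k3 ≤ x3) (w6 : x3 < k3 + 4)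
    (hx : (x1 % 2 = 0 ∧ x2 % 2 = 0 ∧ x3 % 4 = 0) ∨
          (x1 % 2 = 0 ∧ x2 % 2 = 1 ∧ x3 % 4 = 1) ∨
          (x1 % 2 = 1 ∧ x2 % 2 = 1 ∧ x3 % 4 = 2) ∨
          (x1 % 2 = 1 ∧ x2 % 2 = 0 ∧ x3 % 4 = 3)) :
    ∃ r : Fin 4, x1 = k1 + (o1 m1 r : ℤ) ∧ x2 = k2 + (o2 m2 r : ℤ) ∧ x3 = k3 + (o3 m3 r : ℤ) := by
  have hm1 := m1.isLt
  have hm2 := m2.isLt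
  have hm3 := m3.isLt
  have he1 : ∀ r, e1 r = ![0,0,1,1] r := fun _ => rfl
  rcases hx with ⟨h1, h2, h3⟩ | ⟨h1, h2, h3⟩ | ⟨h1, h2, h3⟩ | ⟨h1, h2, h3⟩
  · refine ⟨0, ?_, ?_, ?_⟩ <;>
      simp only [o1, o2, o3, e1, e2, Matrix.cons_val_zero, Fin.val_zero] <;> omega
  · refine ⟨1, ?_, ?_, ?_⟩ <;>
      simp only [o1, o2, o3, e1, e2, Fin.isValue, Matrix.cons_val_one, Matrix.head_cons,
        Fin.val_one, Matrix.cons_val_zero] <;> omega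
  · refine ⟨2, ?_, ?_, ?_⟩ <;>
      simp only [o1, o2, o3, e1, e2, Fin.isValue, Matrix.cons_val_two, Matrix.tail_cons,
        Matrix.head_cons, Fin.val_two] <;> omega
  · refine ⟨3, ?_, ?_, ?_⟩ <;>
      simp only [o1, o2, o3, e1, e2, Fin.isValue, Matrix.cons_val_three, Matrix.tail_cons,
        Matrix.head_cons] <;> omega

/-- The `2 × 2 × 4` array with dots
`{(1,1,1), (1,2,2), (2,2,3), (2,1,4)}` is periodic Costas: in every `2 × 2 × 4` window
of its periodic extension, the difference vectors between pairs of distinct dots are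
all distinct. -/
theorem example_is_periodic_costas :
    ∀ κ α₁ ω₁ α₂ ω₂ : ℤ × ℤ × ℤ,
      InWindow224 κ α₁ → InWindow224 κ ω₁ → InWindow224 κ α₂ → InWindow224 κ ω₂ →
      IsExampleExtDot α₁ → IsExampleExtDot ω₁ → IsExampleExtDot α₂ → IsExampleExtDot ω₂ →
      α₁ ≠ ω₁ → α₂ ≠ ω₂ → ω₁ - α₁ = ω₂ - α₂ → (α₁, ω₁) = (α₂, ω₂) := by
  rintro ⟨k1, k2, k3⟩ ⟨a1, a2, a3⟩ ⟨b1, b2, b3⟩ ⟨c1, c2, c3⟩ ⟨d1, d2, d3⟩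
  rintro ⟨wa1, wa2, wa3, wa4, wa5, wa6⟩ ⟨wb1, wb2, wb3, wb4, wb5, wb6⟩
    ⟨wc1, wc2, wc3, wc4, wc5, wc6⟩ ⟨wd1, wd2, wd3, wd4, wd5, wd6⟩
  intro ha hb hc hd hne1 hne2 hdiff
  replace ha := extDot_mod _ ha
  replace hb := extDot_mod _ hb
  replace hc := extDot_mod _ hc
  replace hd := extDot_mod _ hd
  simp only [Prod.mk.injEq, Prod.mk_sub_mk, ne_eq, not_and] at hne1 hne2 hdiff ⊢
  dsimp only at *
  obtain ⟨h1, h2, h3⟩ := hdiff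
  obtain ⟨m1, hk1⟩ : ∃ m : Fin 2, k1 % 2 = (m.val : ℤ) :=
    ⟨⟨(k1 % 2).toNat, by omega⟩, by rw [Int.toNat_of_nonneg (by omega)]⟩
  obtain ⟨m2, hk2⟩ : ∃ m : Fin 2, k2 % 2 = (m.val : ℤ) :=
    ⟨⟨(k2 % 2).toNat, by omega⟩, by rw [Int.toNat_of_nonneg (by omega)]⟩
  obtain ⟨m3, hk3⟩ : ∃ m : Fin 4, k3 % 4 = (m.val : ℤ) :=
    ⟨⟨(k3 % 4).toNat, by omega⟩, by rw [Int.toNat_of_nonneg (by omega)]⟩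
  obtain ⟨ra, pa1, pa2, pa3⟩ := bridge m1 m2 m3 hk1 hk2 hk3 wa1 wa2 wa3 wa4 wa5 wa6 ha
  obtain ⟨rb, pb1, pb2, pb3⟩ := bridge m1 m2 m3 hk1 hk2 hk3 wb1 wb2 wb3 wb4 wb5 wb6 hb
  obtain ⟨rc, pc1, pc2, pc3⟩ := bridge m1 m2 m3 hk1 hk2 hk3 wc1 wc2 wc3 wc4 wc5 wc6 hc
  obtain ⟨rd, pd1, pd2, pd3⟩ := bridge m1 m2 m3 hk1 hk2 hk3 wd1 wd2 wd3 wd4 wd5 wd6 hd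
  have hab : ra ≠ rb := by
    rintro rfl
    exact hne1 (pa1.trans pb1.symm) (pa2.trans pb2.symm) (pa3.trans pb3.symm)
  have hcd : rc ≠ rd := by
    rintro rfl
    exact hne2 (pc1.trans pd1.symm) (pc2.trans pd2.symm) (pc3.trans pd3.symm)
  have g1 : o1 m1 rb + o1 m1 rc = o1 m1 rd + o1 m1 ra := by omega
  have g2 : o2 m2 rb + o2 m2 rc = o2 m2 rd + o2 m2 ra := by omega
  have g3 : o3 m3 rb + o3 m3 rc = o3 m3 rd + o3 m3 ra := by omega
  obtain ⟨hac, hbd⟩ := core m1 m2 m3 ra rb rc rd hab hcd g1 g2 g3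
  subst hac hbd
  exact ⟨⟨pa1.trans pc1.symm, pa2.trans pc2.symm, pa3.trans pc3.symm⟩,
    pb1.trans pd1.symm, pb2.trans pd2.symm, pb3.trans pd3.symm⟩
end

section
/- Let A be a three-dimensional Costas array defined by a bijection φ : [n_1] × [n_2] → [n_1 n_2] with n_1 ≤ n_2, and suppose A is periodic Costas. If n_1 = 2 and n_2 is odd with n_2 ≥ 3, we reach a contradiction; likewise if n_1 and n_2 are both odd, or both even with max > 4, or n_1 even > 2 with n_2 odd. Hence (n_1, n_2) ∈ {(2,2), (2,4), (4,4)}. -/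
/-- `α ∈ ℤ³` is a dot of the periodic extension of the three-dimensional permutation
array of size `n₁ × n₂ × n₁n₂` defined by `φ`. -/
def IsExtDot3 (n₁ n₂ : ℕ) (φ : Fin n₁ × Fin n₂ ≃ Fin (n₁ * n₂)) (α : ℤ × ℤ × ℤ) : Prop :=
  ∃ p : Fin n₁ × Fin n₂,
    (α.1 : ZMod n₁) = ((p.1 : ℕ) : ZMod n₁) ∧
    (α.2.1 : ZMod n₂) = ((p.2 : ℕ) : ZMod n₂) ∧
    (α.2.2 : ZMod (n₁ * n₂)) = ((φ p : ℕ) : ZMod (n₁ * n₂))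

/-- `α` lies in the `n₁ × n₂ × n₁n₂` window based at `κ`. -/
def InWindow3 (n₁ n₂ : ℕ) (κ α : ℤ × ℤ × ℤ) : Prop :=
  κ.1 ≤ α.1 ∧ α.1 < κ.1 + (n₁ : ℤ) ∧
  κ.2.1 ≤ α.2.1 ∧ α.2.1 < κ.2.1 + (n₂ : ℤ) ∧
  κ.2.2 ≤ α.2.2 ∧ α.2.2 < κ.2.2 + ((n₁ * n₂ : ℕ) : ℤ)

/-- The difference vector in `ℤ³` from the dot `(p, φ p)` to the dot `(q, φ q)`. -/
def diffVec3 (n₁ n₂ : ℕ) (φ : Fin n₁ × Fin n₂ ≃ Fin (n₁ * n₂)) (p q : Fin n₁ × Fin n₂) :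
    ℤ × ℤ × ℤ :=
  ((q.1 : ℤ) - (p.1 : ℤ), (q.2 : ℤ) - (p.2 : ℤ), (φ q : ℤ) - (φ p : ℤ))

/-- The permutation array defined by `φ` is a Costas array: all difference vectors
between distinct ordered pairs of distinct dots are distinct. -/
def IsCostas3 (n₁ n₂ : ℕ) (φ : Fin n₁ × Fin n₂ ≃ Fin (n₁ * n₂)) : Prop :=
  ∀ p₁ q₁ p₂ q₂ : Fin n₁ × Fin n₂, p₁ ≠ q₁ → p₂ ≠ q₂ →
    diffVec3 n₁ n₂ φ p₁ q₁ = diffVec3 n₁ n₂ φ p₂ q₂ → (p₁, q₁) = (p₂, q₂)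

/-- The permutation array defined by `φ` is periodic Costas: every `n₁ × n₂ × n₁n₂`
window of its periodic extension has no repeated difference vector. -/
def IsPeriodicCostas3 (n₁ n₂ : ℕ) (φ : Fin n₁ × Fin n₂ ≃ Fin (n₁ * n₂)) : Prop :=
  ∀ κ α₁ ω₁ α₂ ω₂ : ℤ × ℤ × ℤ,
    InWindow3 n₁ n₂ κ α₁ → InWindow3 n₁ n₂ κ ω₁ →
    InWindow3 n₁ n₂ κ α₂ → InWindow3 n₁ n₂ κ ω₂ →
    IsExtDot3 n₁ n₂ φ α₁ → IsExtDot3 n₁ n₂ φ ω₁ →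
    IsExtDot3 n₁ n₂ φ α₂ → IsExtDot3 n₁ n₂ φ ω₂ →
    α₁ ≠ ω₁ → α₂ ≠ ω₂ → ω₁ - α₁ = ω₂ - α₂ → (α₁, ω₁) = (α₂, ω₂)

private lemma intCast_emod_cast (N : ℕ) (a : ℤ) :
    (((a % (N : ℤ)) : ℤ) : ZMod N) = (a : ZMod N) := by
  rw [ZMod.intCast_eq_intCast_iff']
  simp [Int.emod_emod_of_dvd]

private lemma zmod_natCast_inj {N a b : ℕ} (hN : 0 < N) (ha : a < N) (hb : b < N)
    (h : ((a : ℕ) : ZMod N) = b) : a = b := by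
  haveI : NeZero N := ⟨by omega⟩
  have := congrArg ZMod.val h
  rwa [ZMod.val_cast_of_lt ha, ZMod.val_cast_of_lt hb] at this

private lemma fin_cast_add_one {n : ℕ} [NeZero n] (hn : 2 ≤ n) (x : Fin n) :
    (((x + 1 : Fin n) : ℕ) : ZMod n) = ((x : ℕ) : ZMod n) + 1 := by
  rw [Fin.val_add, Fin.val_one', Nat.mod_eq_of_lt (show 1 < n by omega),
    ZMod.natCast_mod]
  push_cast
  ring

private lemma key {n₁ n₂ : ℕ} (h₁ : 2 ≤ n₁) (h₂ : 3 ≤ n₂)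
    (φ : Fin n₁ × Fin n₂ ≃ Fin (n₁ * n₂))
    (hP : IsPeriodicCostas3 n₁ n₂ φ)
    (p p' q q' : Fin n₁ × Fin n₂) (hne : p ≠ p')
    (hq1 : q.1 = p.1) (hq'1 : q'.1 = p'.1)
    (hq2 : ((q.2 : ℕ) : ZMod n₂) = ((p.2 : ℕ) : ZMod n₂) + 1)
    (hq'2 : ((q'.2 : ℕ) : ZMod n₂) = ((p'.2 : ℕ) : ZMod n₂) + 1)
    (r D u u' κ : ℤ) (hr0 : 0 ≤ r) (hr : r ≤ (n₂ : ℤ) - 2)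
    (hrm : ((r : ZMod n₂)) = ((p'.2 : ℕ) : ZMod n₂) - ((p.2 : ℕ) : ZMod n₂))
    (hw1 : κ ≤ u) (hw2 : u < κ + ((n₁ * n₂ : ℕ) : ℤ))
    (hw3 : κ ≤ u + D) (hw4 : u + D < κ + ((n₁ * n₂ : ℕ) : ℤ))
    (hw5 : κ ≤ u') (hw6 : u' < κ + ((n₁ * n₂ : ℕ) : ℤ))
    (hw7 : κ ≤ u' + D) (hw8 : u' + D < κ + ((n₁ * n₂ : ℕ) : ℤ))
    (hu : ((u : ZMod (n₁ * n₂))) = ((φ p : ℕ) : ZMod (n₁ * n₂)))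
    (hu' : ((u' : ZMod (n₁ * n₂))) = ((φ p' : ℕ) : ZMod (n₁ * n₂)))
    (hv : (((u + D : ℤ) : ZMod (n₁ * n₂))) = ((φ q : ℕ) : ZMod (n₁ * n₂)))
    (hv' : (((u' + D : ℤ) : ZMod (n₁ * n₂))) = ((φ q' : ℕ) : ZMod (n₁ * n₂))) :
    False := by
  have hb := p.2.isLt
  have ha := p.1.isLt
  have ha' := p'.1.isLt
  have h := hP (0, (p.2 : ℤ), κ)
      ((p.1 : ℤ), (p.2 : ℤ), u)
      ((p.1 : ℤ), (p.2 : ℤ) + 1, u + D)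
      ((p'.1 : ℤ), (p.2 : ℤ) + r, u')
      ((p'.1 : ℤ), (p.2 : ℤ) + r + 1, u' + D)
      ⟨by dsimp only; omega, by dsimp only; omega, by dsimp only; omega,
        by dsimp only; omega, hw1, hw2⟩
      ⟨by dsimp only; omega, by dsimp only; omega, by dsimp only; omega,
        by dsimp only; omega, hw3, hw4⟩
      ⟨by dsimp only; omega, by dsimp only; omega, by dsimp only; omega,
        by dsimp only; omega, hw5, hw6⟩
      ⟨by dsimp only; omega, by dsimp only; omega, by dsimp only; omega,
        by dsimp only; omega, hw7, hw8⟩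
      ⟨p, by dsimp only; push_cast; ring, by dsimp only; push_cast; ring, hu⟩
      ⟨q, by dsimp only; rw [hq1]; push_cast; ring,
        by dsimp only; push_cast; rw [hq2]; try ring, hv⟩
      ⟨p', by dsimp only; push_cast; ring, by dsimp only; push_cast; rw [hrm]; try ring, hu'⟩
      ⟨q', by dsimp only; rw [hq'1]; push_cast; ring,
        by dsimp only; push_cast; rw [hq'2, hrm]; try ring, hv'⟩
      (by intro hcon; simp only [Prod.mk.injEq] at hcon; omega)
      (by intro hcon; simp only [Prod.mk.injEq] at hcon; omega)
      (by simp only [Prod.mk_sub_mk, Prod.mk.injEq]; refine ⟨by ring, by ring, by ring⟩)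
  simp only [Prod.mk.injEq] at h
  obtain ⟨⟨-, -, huu⟩, -⟩ := h
  have hN : 0 < n₁ * n₂ := by positivity
  have hcc : ((φ p : ℕ) : ZMod (n₁ * n₂)) = ((φ p' : ℕ) : ZMod (n₁ * n₂)) := by
    rw [← hu, ← hu', huu]
  exact hne (φ.injective (Fin.val_injective
    (zmod_natCast_inj hN (φ p).isLt (φ p').isLt hcc)))

private lemma inj_aux {n₁ n₂ : ℕ} [NeZero n₂] (h₁ : 2 ≤ n₁) (h₂ : 3 ≤ n₂)
    (φ : Fin n₁ × Fin n₂ ≃ Fin (n₁ * n₂)) (hP : IsPeriodicCostas3 n₁ n₂ φ)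
    (p p' : Fin n₁ × Fin n₂) (hne : p ≠ p')
    (hF : ((((φ (p.1, p.2 + 1) : ℕ) : ℤ) - ((φ p : ℕ) : ℤ) : ℤ) : ZMod (n₁ * n₂))
        = ((((φ (p'.1, p'.2 + 1) : ℕ) : ℤ) - ((φ p' : ℕ) : ℤ) : ℤ) : ZMod (n₁ * n₂)))
    (r : ℤ) (hr0 : 0 ≤ r) (hr2 : r ≤ (n₂ : ℤ) - 2)
    (hrm : ((r : ZMod n₂)) = ((p'.2 : ℕ) : ZMod n₂) - ((p.2 : ℕ) : ZMod n₂)) :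
    False := by
  have hN6 : (6 : ℤ) ≤ ((n₁ * n₂ : ℕ) : ℤ) := by exact_mod_cast Nat.mul_le_mul h₁ h₂
  obtain ⟨P, hP1⟩ : ∃ x, φ p = x := ⟨_, rfl⟩
  obtain ⟨P', hP2⟩ : ∃ x, φ p' = x := ⟨_, rfl⟩
  obtain ⟨Q, hQ1⟩ : ∃ x, φ (p.1, p.2 + 1) = x := ⟨_, rfl⟩
  obtain ⟨Q', hQ2⟩ : ∃ x, φ (p'.1, p'.2 + 1) = x := ⟨_, rfl⟩
  rw [hP1, hP2, hQ1, hQ2] at hF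
  obtain ⟨c, hc⟩ : ∃ c : ℤ, ((P : ℕ) : ℤ) = c := ⟨_, rfl⟩
  obtain ⟨c', hc'⟩ : ∃ c' : ℤ, ((P' : ℕ) : ℤ) = c' := ⟨_, rfl⟩
  obtain ⟨e, he⟩ : ∃ e : ℤ, ((Q : ℕ) : ℤ) = e := ⟨_, rfl⟩
  obtain ⟨e', he'⟩ : ∃ e' : ℤ, ((Q' : ℕ) : ℤ) = e' := ⟨_, rfl⟩
  have hc0 : 0 ≤ c := hc ▸ Int.natCast_nonneg _
  have hc1 : c < ((n₁ * n₂ : ℕ) : ℤ) := hc ▸ (by exact_mod_cast P.isLt)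
  have hc'0 : 0 ≤ c' := hc' ▸ Int.natCast_nonneg _
  have hc'1 : c' < ((n₁ * n₂ : ℕ) : ℤ) := hc' ▸ (by exact_mod_cast P'.isLt)
  obtain ⟨t, ht⟩ : ∃ t : ℤ, (e - c) % ((n₁ * n₂ : ℕ) : ℤ) = t := ⟨_, rfl⟩
  obtain ⟨s, hs⟩ : ∃ s : ℤ, (c' - c) % ((n₁ * n₂ : ℕ) : ℤ) = s := ⟨_, rfl⟩
  have ht0 : 0 ≤ t := ht ▸ Int.emod_nonneg _ (by omega)
  have ht1 : t < ((n₁ * n₂ : ℕ) : ℤ) := ht ▸ Int.emod_lt_of_pos _ (by omega)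
  have hs0 : 0 ≤ s := hs ▸ Int.emod_nonneg _ (by omega)
  have hs1 : s < ((n₁ * n₂ : ℕ) : ℤ) := hs ▸ Int.emod_lt_of_pos _ (by omega)
  have hF' : ((e - c : ℤ) : ZMod (n₁ * n₂)) = ((e' - c' : ℤ) : ZMod (n₁ * n₂)) := by
    rw [← hc, ← he, ← hc', ← he']; exact hF
  have A : ((c : ℤ) : ZMod (n₁ * n₂)) = ((P : ℕ) : ZMod (n₁ * n₂)) := by
    rw [← hc]; push_cast; ring
  have A' : ((c' : ℤ) : ZMod (n₁ * n₂)) = ((P' : ℕ) : ZMod (n₁ * n₂)) := by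
    rw [← hc']; push_cast; ring
  have B : ((t : ℤ) : ZMod (n₁ * n₂))
      = ((Q : ℕ) : ZMod (n₁ * n₂)) - ((P : ℕ) : ZMod (n₁ * n₂)) := by
    rw [← ht, intCast_emod_cast, ← hc, ← he]; push_cast; ring
  have B' : ((t : ℤ) : ZMod (n₁ * n₂))
      = ((Q' : ℕ) : ZMod (n₁ * n₂)) - ((P' : ℕ) : ZMod (n₁ * n₂)) := by
    rw [← ht, intCast_emod_cast, hF', ← hc', ← he']; push_cast; ring
  have C : ((s : ℤ) : ZMod (n₁ * n₂))
      = ((P' : ℕ) : ZMod (n₁ * n₂)) - ((P : ℕ) : ZMod (n₁ * n₂)) := by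
    rw [← hs, intCast_emod_cast, ← hc, ← hc']; push_cast; ring
  have Z : ((n₁ : ZMod (n₁ * n₂)) * (n₂ : ZMod (n₁ * n₂))) = 0 := by
    rw [← Nat.cast_mul, ZMod.natCast_self]
  have hq2 : (((p.2 + 1 : Fin n₂) : ℕ) : ZMod n₂) = ((p.2 : ℕ) : ZMod n₂) + 1 :=
    fin_cast_add_one (by omega) p.2
  have hq'2 : (((p'.2 + 1 : Fin n₂) : ℕ) : ZMod n₂) = ((p'.2 : ℕ) : ZMod n₂) + 1 :=
    fin_cast_add_one (by omega) p'.2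
  by_cases hA1 : s + t ≤ ((n₁ * n₂ : ℕ) : ℤ) - 1
  · exact key h₁ h₂ φ hP p p' (p.1, p.2 + 1) (p'.1, p'.2 + 1) hne rfl rfl hq2 hq'2
      r t c (c + s) c hr0 hr2 hrm
      (by omega) (by omega) (by omega) (by omega) (by omega) (by omega) (by omega) (by omega)
      (by rw [hP1]; exact A) (by rw [hP2]; push_cast [A, A', B, B', C, Z]; ring)
      (by rw [hQ1]; push_cast [A, A', B, B', C, Z]; ring)
      (by rw [hQ2]; push_cast [A, A', B, B', C, Z]; linear_combination B' - B)
  by_cases hA2 : t + 1 ≤ s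
  · exact key h₁ h₂ φ hP p p' (p.1, p.2 + 1) (p'.1, p'.2 + 1) hne rfl rfl hq2 hq'2
      r t c (c + s - ((n₁ * n₂ : ℕ) : ℤ)) (c + t + 1 - ((n₁ * n₂ : ℕ) : ℤ)) hr0 hr2 hrm
      (by omega) (by omega) (by omega) (by omega) (by omega) (by omega) (by omega) (by omega)
      (by rw [hP1]; exact A) (by rw [hP2]; push_cast [A, A', B, B', C, Z]; ring)
      (by rw [hQ1]; push_cast [A, A', B, B', C, Z]; ring)
      (by rw [hQ2]; push_cast [A, A', B, B', C, Z]; linear_combination B' - B)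
  by_cases hB1 : s ≤ t - 1
  · exact key h₁ h₂ φ hP p p' (p.1, p.2 + 1) (p'.1, p'.2 + 1) hne rfl rfl hq2 hq'2
      r (t - ((n₁ * n₂ : ℕ) : ℤ)) c (c + s) (c + t - ((n₁ * n₂ : ℕ) : ℤ)) hr0 hr2 hrm
      (by omega) (by omega) (by omega) (by omega) (by omega) (by omega) (by omega) (by omega)
      (by rw [hP1]; exact A) (by rw [hP2]; push_cast [A, A', B, B', C, Z]; ring)
      (by rw [hQ1]; push_cast [A, A', B, B', C, Z]; ring)
      (by rw [hQ2]; push_cast [A, A', B, B', C, Z]; linear_combination B' - B)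
  by_cases hB2 : ((n₁ * n₂ : ℕ) : ℤ) + 1 ≤ s + t
  · exact key h₁ h₂ φ hP p p' (p.1, p.2 + 1) (p'.1, p'.2 + 1) hne rfl rfl hq2 hq'2
      r (t - ((n₁ * n₂ : ℕ) : ℤ)) c (c + s - ((n₁ * n₂ : ℕ) : ℤ)) (c + 1 - ((n₁ * n₂ : ℕ) : ℤ))
      hr0 hr2 hrm
      (by omega) (by omega) (by omega) (by omega) (by omega) (by omega) (by omega) (by omega)
      (by rw [hP1]; exact A) (by rw [hP2]; push_cast [A, A', B, B', C, Z]; ring)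
      (by rw [hQ1]; push_cast [A, A', B, B', C, Z]; ring)
      (by rw [hQ2]; push_cast [A, A', B, B', C, Z]; linear_combination B' - B)
  -- exceptional case : s = t and s + t = n₁ n₂
  have hst : s = t := by omega
  have hsum : s + t = ((n₁ * n₂ : ℕ) : ℤ) := by omega
  have hN0 : 0 < n₁ * n₂ := by positivity
  have hstz : ((s : ℤ) : ZMod (n₁ * n₂)) = ((t : ℤ) : ZMod (n₁ * n₂)) := by rw [hst]
  have hZ' : ((s : ℤ) : ZMod (n₁ * n₂)) + ((t : ℤ) : ZMod (n₁ * n₂)) = 0 := by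
    have h0 : ((s + t : ℤ) : ZMod (n₁ * n₂)) = 0 := by
      rw [hsum]; push_cast [Z]; ring
    push_cast at h0; exact h0
  have h1 : ((P' : ℕ) : ZMod (n₁ * n₂)) = ((Q : ℕ) : ZMod (n₁ * n₂)) := by
    linear_combination B + hstz - C
  have h2 : ((Q' : ℕ) : ZMod (n₁ * n₂)) = ((P : ℕ) : ZMod (n₁ * n₂)) := by
    linear_combination hZ' - B' - C
  have e1 : p' = (p.1, p.2 + 1) := by
    apply φ.injective
    rw [hP2, hQ1]
    exact Fin.val_injective (zmod_natCast_inj hN0 P'.isLt Q.isLt h1)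
  have e2 : (p'.1, p'.2 + 1) = p := by
    apply φ.injective
    rw [hP1, hQ2]
    exact Fin.val_injective (zmod_natCast_inj hN0 Q'.isLt P.isLt h2)
  have e3 : p.2 + 1 + 1 = p.2 := by
    have h6 := congrArg Prod.snd e2
    have h4 := congrArg Prod.snd e1
    dsimp at h6 h4
    rw [h4] at h6
    exact h6
  have h5 := congrArg (fun x : Fin n₂ => ((x : ℕ) : ZMod n₂)) e3
  rw [fin_cast_add_one (by omega), fin_cast_add_one (by omega)] at h5
  have h20 : ((2 : ℕ) : ZMod n₂) = 0 := by push_cast; linear_combination h5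
  have := Nat.le_of_dvd (by norm_num) ((ZMod.natCast_eq_zero_iff 2 n₂).mp h20)
  omega

private lemma no_periodic {n₁ n₂ : ℕ} (h₁ : 2 ≤ n₁) (h₂ : 3 ≤ n₂)
    (φ : Fin n₁ × Fin n₂ ≃ Fin (n₁ * n₂)) (hP : IsPeriodicCostas3 n₁ n₂ φ) : False := by
  haveI : NeZero n₂ := ⟨by omega⟩
  have hN0 : 0 < n₁ * n₂ := by positivity
  haveI : NeZero (n₁ * n₂) := ⟨by omega⟩
  classical
  have hinj : ∀ a b : Fin n₁ × Fin n₂, a ≠ b →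
      ((((φ (a.1, a.2 + 1) : ℕ) : ℤ) - ((φ a : ℕ) : ℤ) : ℤ) : ZMod (n₁ * n₂))
        ≠ ((((φ (b.1, b.2 + 1) : ℕ) : ℤ) - ((φ b : ℕ) : ℤ) : ℤ) : ZMod (n₁ * n₂)) := by
    intro a b hab heq
    obtain ⟨rr, hrr⟩ : ∃ rr : ℤ,
        (((b.2 : ℕ) : ℤ) - ((a.2 : ℕ) : ℤ)) % (n₂ : ℤ) = rr := ⟨_, rfl⟩
    have hrr0 : 0 ≤ rr := hrr ▸ Int.emod_nonneg _ (by omega)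
    have hrr1 : rr < (n₂ : ℤ) := hrr ▸ Int.emod_lt_of_pos _ (by omega)
    have hrrm : ((rr : ℤ) : ZMod n₂) = ((b.2 : ℕ) : ZMod n₂) - ((a.2 : ℕ) : ZMod n₂) := by
      rw [← hrr, intCast_emod_cast]; push_cast; ring
    by_cases hcase : rr ≤ (n₂ : ℤ) - 2
    · exact inj_aux h₁ h₂ φ hP a b hab heq rr hrr0 hcase hrrm
    · have h9 : rr = (n₂ : ℤ) - 1 := by omega
      refine inj_aux h₁ h₂ φ hP b a (Ne.symm hab) heq.symm 1 (by norm_num)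
        (by omega) ?_
      have h10 : (-1 : ZMod n₂) = ((b.2 : ℕ) : ZMod n₂) - ((a.2 : ℕ) : ZMod n₂) := by
        rw [← hrrm, h9]; push_cast [ZMod.natCast_self]; ring
      push_cast
      linear_combination -h10
  have hnz : ∀ a : Fin n₁ × Fin n₂,
      ((((φ (a.1, a.2 + 1) : ℕ) : ℤ) - ((φ a : ℕ) : ℤ) : ℤ) : ZMod (n₁ * n₂)) ≠ 0 := by
    intro a h0
    have h3 : ((φ (a.1, a.2 + 1) : ℕ) : ZMod (n₁ * n₂)) = ((φ a : ℕ) : ZMod (n₁ * n₂)) := by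
      push_cast at h0; linear_combination h0
    have h4 : (a.1, a.2 + 1) = a :=
      φ.injective (Fin.val_injective (zmod_natCast_inj hN0 (φ _).isLt (φ _).isLt h3))
    have h5 := congrArg Prod.snd h4
    dsimp only at h5
    have h6 := congrArg (fun y : Fin n₂ => ((y : ℕ) : ZMod n₂)) h5
    rw [fin_cast_add_one (by omega)] at h6
    have h7 : ((1 : ℕ) : ZMod n₂) = 0 := by push_cast; linear_combination h6
    have := Nat.le_of_dvd (by norm_num) ((ZMod.natCast_eq_zero_iff 1 n₂).mp h7)
    omega
  have hcard : Fintype.card (Fin n₁ × Fin n₂) ≤ Fintype.card {z : ZMod (n₁ * n₂) // ¬ z = 0} := by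
    refine Fintype.card_le_of_injective (fun a =>
      ⟨((((φ (a.1, a.2 + 1) : ℕ) : ℤ) - ((φ a : ℕ) : ℤ) : ℤ) : ZMod (n₁ * n₂)), hnz a⟩) ?_
    intro a b hab
    by_contra hne2
    exact hinj a b hne2 (congrArg Subtype.val hab)
  have c1 : Fintype.card (Fin n₁ × Fin n₂) = n₁ * n₂ := by simp
  have c2 : Fintype.card {z : ZMod (n₁ * n₂) // ¬ z = 0} = n₁ * n₂ - 1 := by
    rw [Fintype.card_subtype_compl, Fintype.card_subtype_eq, ZMod.card]
  have h6 : 6 ≤ n₁ * n₂ := Nat.mul_le_mul h₁ h₂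
  omega

/-- Let `A` be a three-dimensional Costas array defined by a
bijection `φ : [n₁] × [n₂] → [n₁n₂]` with `2 ≤ n₁ ≤ n₂`, and suppose `A` is periodic
Costas.  The cases `n₁ = 2`, `n₂` odd `≥ 3`; both odd; both even with `max > 4`; and
`n₁` even `> 2` with `n₂` odd are all impossible, so
`(n₁, n₂) ∈ {(2,2), (2,4), (4,4)}`. -/
theorem periodic_costas_3d_reduction (n₁ n₂ : ℕ) (h₁ : 2 ≤ n₁) (h₁₂ : n₁ ≤ n₂)
    (φ : Fin n₁ × Fin n₂ ≃ Fin (n₁ * n₂))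
    (hC : IsCostas3 n₁ n₂ φ) (hP : IsPeriodicCostas3 n₁ n₂ φ) :
    (n₁, n₂) = (2, 2) ∨ (n₁, n₂) = (2, 4) ∨ (n₁, n₂) = (4, 4) := by
  by_cases h : n₂ ≤ 2
  · left
    have e1 : n₁ = 2 := by omega
    have e2 : n₂ = 2 := by omega
    rw [e1, e2]
  · exact absurd (no_periodic h₁ (by omega) φ hP) (by simp)
end
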